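/- arXiv:math/9804020 — 6 statements merged into one kernel-verified Lean document; each statement's English description precedes it below -/
import Mathlib

section
/- If N and M are two names of the same n-diagram D, then the canonical braiding of N and the canonical braiding of M (both chord words on 2n strands) are related by a finite sequence of commutation moves and cyclic permutation moves. -/
/-- A chord word on `m` strands: a list of generators `A(i,j)` recorded as pairs `(i,j)`
with `1 ≤ i < j ≤ m`. -/
def IsChordWord (m : ℕ) (W : List (ℕ × ℕ)) : Prop :=
  ∀ p ∈ W, 1 ≤ p.1 ∧ p.1 < p.2 ∧ p.2 ≤ m

/-- The standard name read from a chord word `W` on `m` strands: concatenate, for each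
strand `s = 1, …, m`, the increasing enumeration of the (1-based) indices `r` of the
generators of `W` having `s` as an endpoint. -/
def standardName (m : ℕ) (W : List (ℕ × ℕ)) : List ℕ :=
  (List.range m).flatMap fun s =>
    ((List.range W.length).filter
      (fun r => decide ((W.getD r (0, 0)).1 = s + 1 ∨ (W.getD r (0, 0)).2 = s + 1))).map
      (· + 1)

/-- `N` is a name of an `n`-diagram: a list of length `2n` over `{1, …, n}` in which
every label occurs exactly twice. -/
def IsName (n : ℕ) (N : List ℕ) : Prop :=
  N.length = 2 * n ∧ ∀ r, 1 ≤ r → r ≤ n → N.count r = 2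

/-- Two names represent the same `n`-diagram: one is obtained from the other by a cyclic
rotation followed by a relabeling (a bijection of `{1, …, n}` applied to all entries). -/
def SameDiagram (n : ℕ) (N M : List ℕ) : Prop :=
  ∃ (k : ℕ) (σ : Equiv.Perm ℕ),
    (∀ x, 1 ≤ x → x ≤ n → 1 ≤ σ x ∧ σ x ≤ n) ∧ M = (N.rotate k).map σ

/-- A chord word `W` on `m` strands is a braiding of the `n`-diagram named by `N` if the
standard name read from `W` is a name of that diagram. -/
def IsBraiding (n m : ℕ) (W : List (ℕ × ℕ)) (N : List ℕ) : Prop :=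
  IsChordWord m W ∧ SameDiagram n (standardName m W) N

/-- The braid index of the diagram named by `N`: the least number `m ≥ 1` of strands of
any braiding of the diagram. -/
noncomputable def braidIndex (n : ℕ) (N : List ℕ) : ℕ :=
  sInf {m | 1 ≤ m ∧ ∃ W, IsBraiding n m W N}

/-- The increasing list of the (0-based) positions at which `x` occurs in `N`. -/
def positionsOf (N : List ℕ) (x : ℕ) : List ℕ :=
  (List.range N.length).filter fun p => decide (N.getD p 0 = x)

/-- The canonical braiding of a name `N` of an `n`-diagram: the chord word
`A(i_1,j_1) ⋯ A(i_n,j_n)` on `2n` strands, where `i_r < j_r` are the two (1-based)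
positions at which the label `r` occurs in `N`. -/
def canonicalBraiding (n : ℕ) (N : List ℕ) : List (ℕ × ℕ) :=
  (List.range n).map fun r =>
    ((positionsOf N (r + 1)).getD 0 0 + 1, (positionsOf N (r + 1)).getD 1 0 + 1)

/-- Commutation move: interchange two adjacent generators with disjoint endpoint sets. -/
def CommMove (V W : List (ℕ × ℕ)) : Prop :=
  ∃ (U V' : List (ℕ × ℕ)) (i j k l : ℕ),
    i ≠ k ∧ i ≠ l ∧ j ≠ k ∧ j ≠ l ∧
    V = U ++ (i, j) :: (k, l) :: V' ∧ W = U ++ (k, l) :: (i, j) :: V'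

/-- Cyclic permutation move on `m` strands: replace `W'·A(i,j)` by `A(i+1,j+1)·W'` when
`j < m`, and `W'·A(i,m)` by `A(1,i+1)·W'`. -/
def CycMove (m : ℕ) (V W : List (ℕ × ℕ)) : Prop :=
  (∃ (U : List (ℕ × ℕ)) (i j : ℕ), j < m ∧ V = U ++ [(i, j)] ∧ W = (i + 1, j + 1) :: U) ∨
  (∃ (U : List (ℕ × ℕ)) (i : ℕ), V = U ++ [(i, m)] ∧ W = (1, i + 1) :: U)

/-- Stabilization move: replace the word `U·A(i,m)` on `m` strands by `U·A(i,m+1)` on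
`m+1` strands. Words are recorded together with their number of strands. -/
def StabMove (p q : ℕ × List (ℕ × ℕ)) : Prop :=
  ∃ (U : List (ℕ × ℕ)) (i m : ℕ),
    p = (m, U ++ [(i, m)]) ∧ q = (m + 1, U ++ [(i, m + 1)])

/-- A single move on chord-words-with-strand-count: a commutation move, a cyclic
permutation move (in either direction), or a stabilization move (in either direction). -/
def Move (p q : ℕ × List (ℕ × ℕ)) : Prop :=
  (p.1 = q.1 ∧ (CommMove p.2 q.2 ∨ CycMove p.1 p.2 q.2 ∨ CycMove p.1 q.2 p.2)) ∨
    StabMove p q ∨ StabMove q p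

/-- Two chord-words-with-strand-count are related by a finite sequence of commutation,
cyclic permutation and stabilization moves. -/
def MoveEquiv (p q : ℕ × List (ℕ × ℕ)) : Prop :=
  Relation.ReflTransGen Move p q

/-- A commutation or cyclic permutation move (in either direction) on `m` strands. -/
def CCMove (m : ℕ) (V W : List (ℕ × ℕ)) : Prop :=
  CommMove V W ∨ CycMove m V W ∨ CycMove m W V

/-- Related by a finite sequence of commutation and cyclic permutation moves. -/
def CCEquiv (m : ℕ) : List (ℕ × ℕ) → List (ℕ × ℕ) → Prop :=
  Relation.ReflTransGen (CCMove m)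

/-- Cyclic equivalence on `m` strands: related by a finite sequence of cyclic
permutation moves. -/
def CycEquiv (m : ℕ) : List (ℕ × ℕ) → List (ℕ × ℕ) → Prop :=
  Relation.ReflTransGen fun V W => CycMove m V W ∨ CycMove m W V

/-- Decrease by one every strand index greater than `j`. -/
def shiftGt (j : ℕ) (W : List (ℕ × ℕ)) : List (ℕ × ℕ) :=
  W.map fun p => ((if j < p.1 then p.1 - 1 else p.1), (if j < p.2 then p.2 - 1 else p.2))

/-- Decrease by one every strand index greater than or equal to `j`. -/
def shiftGe (j : ℕ) (W : List (ℕ × ℕ)) : List (ℕ × ℕ) :=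
  W.map fun p => ((if j ≤ p.1 then p.1 - 1 else p.1), (if j ≤ p.2 then p.2 - 1 else p.2))

/-- Decreasing stabilization: replace `U·A(i,j)·V` on `m` strands (where `i < j - 1`,
the strand index `j` does not occur in `U`, and `j - 1` does not occur in `V`) by
`U'·A(i,j-1)·V'` on `m - 1` strands, where `U'` is `U` with every index `> j` decreased
by one and `V'` is `V` with every index `≥ j` decreased by one. -/
def DecStab (p q : ℕ × List (ℕ × ℕ)) : Prop :=
  ∃ (U V : List (ℕ × ℕ)) (i j : ℕ),
    i + 1 < j ∧
    (∀ x ∈ U, x.1 ≠ j ∧ x.2 ≠ j) ∧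
    (∀ x ∈ V, x.1 ≠ j - 1 ∧ x.2 ≠ j - 1) ∧
    p.2 = U ++ (i, j) :: V ∧
    q = (p.1 - 1, shiftGt j U ++ (i, j - 1) :: shiftGe j V)

/-- The blow-up of a name `N` with weights `w`: both occurrences of each label `r` are
replaced by the same ordered block of `w r` distinct fresh labels. -/
def blowUp (w : ℕ → ℕ) (N : List ℕ) : List ℕ :=
  N.flatMap fun r => (List.range (w r)).map fun t => (∑ s ∈ Finset.Ico 1 r, w s) + t + 1

/-- The chord word obtained from `Wa` by repeating its `r`-th generator `w r` times
consecutively, in place. -/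
def powerWord (w : ℕ → ℕ) (Wa : List (ℕ × ℕ)) : List (ℕ × ℕ) :=
  (List.range Wa.length).flatMap fun r => List.replicate (w (r + 1)) (Wa.getD r (0, 0))

/-- The diagram named by `N` is amalgamated: no name of the diagram is (cyclically) of
the form `x y U x y V` with `x ≠ y`. -/
def Amalgamated (n : ℕ) (N : List ℕ) : Prop :=
  ¬∃ (x y : ℕ) (U V : List ℕ), x ≠ y ∧ SameDiagram n N (x :: y :: (U ++ x :: y :: V))

/-- The chords labeled `r` and `s` cross in the name `N`: their occurrences interleave
cyclically. -/
def Crosses (N : List ℕ) (r s : ℕ) : Prop :=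
  ∃ k, [r, s, r, s].Sublist (N.rotate k)

lemma positionsOf_cons (a x : ℕ) (L : List ℕ) :
    positionsOf (a :: L) x =
      (if a = x then [0] else []) ++ (positionsOf L x).map (· + 1) := by
  unfold positionsOf
  rw [List.length_cons, List.range_succ_eq_map, List.filter_cons]
  by_cases h : a = x
  · simp [h, List.filter_map, Function.comp_def]
  · simp [h, List.filter_map, Function.comp_def]

lemma positionsOf_append_singleton (L : List ℕ) (a x : ℕ) :
    positionsOf (L ++ [a]) x =
      positionsOf L x ++ (if a = x then [L.length] else []) := by
  unfold positionsOf
  rw [List.length_append, List.length_singleton, List.range_succ, List.filter_append]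
  congr 1
  · apply List.filter_congr
    intro p hp
    rw [List.mem_range] at hp
    rw [List.getD_eq_getElem _ _ (by simp; omega), List.getD_eq_getElem _ _ hp,
      List.getElem_append_left hp]
  · have hg : (L ++ [a]).getD L.length 0 = a := by
      rw [List.getD_eq_getElem _ _ (by simp)]
      simp
    by_cases h : a = x <;> simp [hg, h]

lemma length_positionsOf (L : List ℕ) (x : ℕ) :
    (positionsOf L x).length = L.count x := by
  induction L with
  | nil => simp [positionsOf]
  | cons a T ih =>
    rw [positionsOf_cons, List.count_cons]
    by_cases h : a = x
    · simp [h, ih]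
    · have : (a == x) = false := by simpa using h
      simp [h, this, ih]

lemma mem_positionsOf {L : List ℕ} {x p : ℕ} :
    p ∈ positionsOf L x ↔ p < L.length ∧ L.getD p 0 = x := by
  simp [positionsOf, List.mem_filter, List.mem_range]

lemma pairwise_positionsOf (L : List ℕ) (x : ℕ) :
    (positionsOf L x).Pairwise (· < ·) :=
  List.pairwise_lt_range.filter _

lemma positionsOf_eq_pair {L : List ℕ} {x : ℕ} (h : L.count x = 2) :
    ∃ p1 p2, p1 < p2 ∧ p2 < L.length ∧ L.getD p1 0 = x ∧ L.getD p2 0 = x ∧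
      positionsOf L x = [p1, p2] := by
  have hl : (positionsOf L x).length = 2 := by rw [length_positionsOf, h]
  obtain ⟨p1, p2, hE⟩ := List.length_eq_two.mp hl
  have hp1 : p1 ∈ positionsOf L x := by rw [hE]; simp
  have hp2 : p2 ∈ positionsOf L x := by rw [hE]; simp
  rw [mem_positionsOf] at hp1 hp2
  have hpw := pairwise_positionsOf L x
  rw [hE] at hpw
  have hlt : p1 < p2 := by
    rw [List.pairwise_cons] at hpw
    exact hpw.1 p2 (by simp)
  exact ⟨p1, p2, hlt, hp2.1, hp1.2, hp2.2, hE⟩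

lemma positionsOf_eq_singleton {L : List ℕ} {x : ℕ} (h : L.count x = 1) :
    ∃ q, q < L.length ∧ L.getD q 0 = x ∧ positionsOf L x = [q] := by
  have hl : (positionsOf L x).length = 1 := by rw [length_positionsOf, h]
  obtain ⟨q, hE⟩ := List.length_eq_one_iff.mp hl
  have hq : q ∈ positionsOf L x := by rw [hE]; simp
  rw [mem_positionsOf] at hq
  exact ⟨q, hq.1, hq.2, hE⟩

def dmap (m : ℕ) (p : ℕ × ℕ) : ℕ × ℕ :=
  if p.1 = 1 then (p.2 - 1, m) else (p.1 - 1, p.2 - 1)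

lemma count_cons_self_eq {a : ℕ} {T : List ℕ} {x : ℕ} (h : a = x) :
    (a :: T).count x = T.count x + 1 := by
  subst h; simp

lemma count_cons_ne {a : ℕ} {T : List ℕ} {x : ℕ} (h : ¬ a = x) :
    (a :: T).count x = T.count x := by
  rw [List.count_cons]
  simp [h]

lemma canonicalBraiding_rotate_one {n : ℕ} {N : List ℕ} (hn : 0 < n) (hN : IsName n N) :
    canonicalBraiding n (N.rotate 1) = (canonicalBraiding n N).map (dmap (2 * n)) := by
  obtain ⟨a, T, rfl⟩ : ∃ a T, N = a :: T := by
    cases N with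
    | nil => exfalso; have := hN.1; simp at this; omega
    | cons a T => exact ⟨a, T, rfl⟩
  have hrot : (a :: T).rotate 1 = T ++ [a] := by
    simpa using List.rotate_cons_succ T a 0
  have hlen : T.length + 1 = 2 * n := by simpa using hN.1
  rw [hrot]
  unfold canonicalBraiding
  rw [List.map_map]
  apply List.map_congr_left
  intro r hr
  rw [List.mem_range] at hr
  simp only [Function.comp_apply]
  have hcount : (a :: T).count (r + 1) = 2 := hN.2 (r + 1) (by omega) (by omega)
  by_cases hax : a = r + 1
  · have hT : T.count (r + 1) = 1 := by
      have := count_cons_self_eq (x := r + 1) (T := T) hax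
      omega
    obtain ⟨q, hq, hqv, hE⟩ := positionsOf_eq_singleton hT
    rw [positionsOf_cons, positionsOf_append_singleton, hE, if_pos hax, if_pos hax]
    simp [dmap]
    omega
  · have hT : T.count (r + 1) = 2 := by rw [← count_cons_ne hax]; exact hcount
    obtain ⟨p1, p2, h12, hp2, hv1, hv2, hE⟩ := positionsOf_eq_pair hT
    rw [positionsOf_cons, positionsOf_append_singleton, hE, if_neg hax, if_neg hax]
    simp [dmap]

lemma isChordWord_canonicalBraiding {n : ℕ} {N : List ℕ} (hN : IsName n N) :
    IsChordWord (2 * n) (canonicalBraiding n N) := by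
  intro p hp
  rw [canonicalBraiding, List.mem_map] at hp
  obtain ⟨r, hr, rfl⟩ := hp
  rw [List.mem_range] at hr
  obtain ⟨p1, p2, h12, hp2, -, -, hE⟩ :=
    positionsOf_eq_pair (hN.2 (r + 1) (by omega) (by omega))
  rw [hE]
  simp
  have := hN.1
  omega

def Dis (p q : ℕ × ℕ) : Prop := p.1 ≠ q.1 ∧ p.1 ≠ q.2 ∧ p.2 ≠ q.1 ∧ p.2 ≠ q.2

lemma dis_symm : Symmetric Dis := by
  intro p q h
  obtain ⟨h1, h2, h3, h4⟩ := h
  exact ⟨h1.symm, h3.symm, h2.symm, h4.symm⟩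

lemma pairwise_dis {n : ℕ} {N : List ℕ} (hN : IsName n N) :
    (canonicalBraiding n N).Pairwise Dis := by
  rw [canonicalBraiding, List.pairwise_map]
  rw [List.pairwise_iff_getElem]
  intro i j hi hj hij
  simp only [List.getElem_range]
  rw [List.length_range] at hi hj
  obtain ⟨p1, p2, h12, hp2, hv1, hv2, hE⟩ :=
    positionsOf_eq_pair (hN.2 (i + 1) (by omega) (by omega))
  obtain ⟨q1, q2, h12', hq2, hw1, hw2, hE'⟩ :=
    positionsOf_eq_pair (hN.2 (j + 1) (by omega) (by omega))
  rw [hE, hE']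
  have hne : ∀ p q : ℕ, N.getD p 0 = i + 1 → N.getD q 0 = j + 1 → p ≠ q := by
    intro p q h1 h2 hpq
    rw [hpq, h2] at h1
    omega
  refine ⟨?_, ?_, ?_, ?_⟩ <;> simp <;>
    [exact hne _ _ hv1 hw1; exact hne _ _ hv1 hw2; exact hne _ _ hv2 hw1;
      exact hne _ _ hv2 hw2]

lemma commMove_cons (a : ℕ × ℕ) {V W : List (ℕ × ℕ)} (h : CommMove V W) :
    CommMove (a :: V) (a :: W) := by
  obtain ⟨U, V', i, j, k, l, h1, h2, h3, h4, rfl, rfl⟩ := h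
  exact ⟨a :: U, V', i, j, k, l, h1, h2, h3, h4, rfl, rfl⟩

lemma commEquiv_cons (a : ℕ × ℕ) {V W : List (ℕ × ℕ)}
    (h : Relation.ReflTransGen CommMove V W) :
    Relation.ReflTransGen CommMove (a :: V) (a :: W) := by
  induction h with
  | refl => exact .refl
  | tail _ h2 ih => exact ih.tail (commMove_cons a h2)

lemma perm_commEquiv {V W : List (ℕ × ℕ)} (h : V.Perm W) (hp : V.Pairwise Dis) :
    Relation.ReflTransGen CommMove V W := by
  induction h with
  | nil => exact .refl
  | cons a _ ih => exact commEquiv_cons a (ih (List.Pairwise.of_cons hp))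
  | swap a b l =>
    have hab : Dis b a := (List.pairwise_cons.mp hp).1 a (by simp)
    refine Relation.ReflTransGen.single ?_
    exact ⟨[], l, b.1, b.2, a.1, a.2, hab.1, hab.2.1, hab.2.2.1, hab.2.2.2, by simp, by simp⟩
  | trans h1 h2 ih1 ih2 =>
    exact (ih1 hp).trans (ih2 ((h1.pairwise_iff (fun {_ _} h => dis_symm h)).mp hp))

lemma perm_ccEquiv {m : ℕ} {V W : List (ℕ × ℕ)} (h : V.Perm W) (hp : V.Pairwise Dis) :
    CCEquiv m V W :=
  Relation.ReflTransGen.mono (fun _ _ hc => Or.inl hc) _ _ (perm_commEquiv h hp)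

lemma cyc_chain (m : ℕ) (W : List (ℕ × ℕ)) (hW : IsChordWord m W) :
    ∀ U : List (ℕ × ℕ), CCEquiv m (W ++ U) (U ++ W.map (dmap m)) := by
  induction W with
  | nil => intro U; simp; exact .refl
  | cons c W' ih =>
    intro U
    have hc := hW c (by simp)
    have hstep : CCMove m (c :: (W' ++ U)) ((W' ++ U) ++ [dmap m c]) := by
      refine Or.inr (Or.inr ?_)
      by_cases h1 : c.1 = 1
      · refine Or.inr ⟨W' ++ U, c.2 - 1, ?_, ?_⟩
        · rw [dmap, if_pos h1]
        · have h2 : c.2 - 1 + 1 = c.2 := by omega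
          rw [h2, ← h1]
      · refine Or.inl ⟨W' ++ U, c.1 - 1, c.2 - 1, by omega, ?_, ?_⟩
        · rw [dmap, if_neg h1]
        · have h2 : c.1 - 1 + 1 = c.1 := by omega
          have h3 : c.2 - 1 + 1 = c.2 := by omega
          rw [h2, h3]
    have hrest := ih (fun p hp => hW p (by simp [hp])) (U ++ [dmap m c])
    refine Relation.ReflTransGen.head hstep ?_
    have : (W' ++ U) ++ [dmap m c] = W' ++ (U ++ [dmap m c]) := by simp
    rw [this]
    have h4 : (U ++ [dmap m c]) ++ W'.map (dmap m) = U ++ (c :: W').map (dmap m) := by simp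
    rw [← h4]
    exact hrest

lemma positionsOf_map (σ : Equiv.Perm ℕ) (L : List ℕ) (x : ℕ) :
    positionsOf (L.map σ) x = positionsOf L (σ.symm x) := by
  unfold positionsOf
  rw [List.length_map]
  apply List.filter_congr
  intro p hp
  rw [List.mem_range] at hp
  rw [List.getD_eq_getElem _ _ (by simpa), List.getD_eq_getElem _ _ hp, List.getElem_map]
  simp only [decide_eq_decide]
  exact Equiv.apply_eq_iff_eq_symm_apply σ

lemma symm_preserves {n : ℕ} (σ : Equiv.Perm ℕ)
    (hσ : ∀ x, 1 ≤ x → x ≤ n → 1 ≤ σ x ∧ σ x ≤ n) :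
    ∀ x, 1 ≤ x → x ≤ n → 1 ≤ σ.symm x ∧ σ.symm x ≤ n := by
  intro x h1 h2
  have hsub : (Finset.Icc 1 n).image σ ⊆ Finset.Icc 1 n := by
    intro y hy
    rw [Finset.mem_image] at hy
    obtain ⟨z, hz, rfl⟩ := hy
    rw [Finset.mem_Icc] at hz
    rw [Finset.mem_Icc]
    exact hσ z hz.1 hz.2
  have hcard : ((Finset.Icc 1 n).image σ).card = (Finset.Icc 1 n).card :=
    Finset.card_image_of_injective _ σ.injective
  have heq : (Finset.Icc 1 n).image σ = Finset.Icc 1 n :=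
    Finset.eq_of_subset_of_card_le hsub (le_of_eq hcard.symm)
  have hx : x ∈ (Finset.Icc 1 n).image σ := by
    rw [heq, Finset.mem_Icc]; exact ⟨h1, h2⟩
  rw [Finset.mem_image] at hx
  obtain ⟨z, hz, hzx⟩ := hx
  rw [Finset.mem_Icc] at hz
  have : σ.symm x = z := by rw [← hzx]; simp
  rw [this]
  exact hz

lemma braiding_map_perm {n : ℕ} (σ : Equiv.Perm ℕ)
    (hσ : ∀ x, 1 ≤ x → x ≤ n → 1 ≤ σ x ∧ σ x ≤ n) (L : List ℕ) :
    (canonicalBraiding n (L.map σ)).Perm (canonicalBraiding n L) := by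
  have hσ' := symm_preserves σ hσ
  set F : ℕ → ℕ × ℕ := fun x =>
    ((positionsOf L x).getD 0 0 + 1, (positionsOf L x).getD 1 0 + 1) with hF
  set τ : ℕ → ℕ := fun r => σ.symm (r + 1) - 1 with hτ
  have h1 : canonicalBraiding n (L.map σ)
      = ((List.range n).map τ).map (fun r => F (r + 1)) := by
    rw [canonicalBraiding, List.map_map]
    apply List.map_congr_left
    intro r hr
    rw [List.mem_range] at hr
    have hge : 1 ≤ σ.symm (r + 1) := (hσ' (r + 1) (by omega) (by omega)).1
    have : τ r + 1 = σ.symm (r + 1) := by simp [hτ]; omega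
    simp only [Function.comp_apply, positionsOf_map, hF, this]
  have h2 : canonicalBraiding n L = (List.range n).map (fun r => F (r + 1)) := rfl
  rw [h1, h2]
  apply List.Perm.map
  have hnd : ((List.range n).map τ).Nodup := by
    refine List.Nodup.map_on ?_ List.nodup_range
    intro a ha b hb hab
    rw [List.mem_range] at ha hb
    have ha1 := (hσ' (a + 1) (by omega) (by omega)).1
    have hb1 := (hσ' (b + 1) (by omega) (by omega)).1
    have : σ.symm (a + 1) = σ.symm (b + 1) := by simp [hτ] at hab; omega
    have := σ.symm.injective this
    omega
  rw [List.perm_ext_iff_of_nodup hnd List.nodup_range]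
  intro x
  rw [List.mem_map, List.mem_range]
  constructor
  · rintro ⟨r, hr, rfl⟩
    rw [List.mem_range] at hr
    have := hσ' (r + 1) (by omega) (by omega)
    simp [hτ]
    omega
  · intro hx
    refine ⟨σ (x + 1) - 1, ?_, ?_⟩
    · rw [List.mem_range]
      have := hσ (x + 1) (by omega) (by omega)
      omega
    · have h1' := (hσ (x + 1) (by omega) (by omega)).1
      have : σ (x + 1) - 1 + 1 = σ (x + 1) := by omega
      simp [hτ, this]

lemma isName_rotate {n : ℕ} {N : List ℕ} (hN : IsName n N) (k : ℕ) :
    IsName n (N.rotate k) := by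
  constructor
  · rw [List.length_rotate]; exact hN.1
  · intro r h1 h2
    rw [(List.rotate_perm N k).count_eq]
    exact hN.2 r h1 h2

/-- Canonical braidings of two names of the same `n`-diagram are
related by a finite sequence of commutation moves and cyclic permutation moves
(on `2n` strands). -/
theorem canonicalBraidings_ccEquiv (n : ℕ) (N M : List ℕ)
    (hN : IsName n N) (hM : IsName n M) (h : SameDiagram n N M) :
    CCEquiv (2 * n) (canonicalBraiding n N) (canonicalBraiding n M) := by
  obtain ⟨k, σ, hσ, rfl⟩ := h
  rcases Nat.eq_zero_or_pos n with rfl | hn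
  · simp [canonicalBraiding]
    exact .refl
  · have hrotchain : ∀ k, CCEquiv (2 * n) (canonicalBraiding n N)
        (canonicalBraiding n (N.rotate k)) := by
      intro k
      induction k with
      | zero => rw [List.rotate_zero]; exact .refl
      | succ k ih =>
        have hk : IsName n (N.rotate k) := isName_rotate hN k
        have : N.rotate (k + 1) = (N.rotate k).rotate 1 := by
          rw [List.rotate_rotate]
        rw [this, canonicalBraiding_rotate_one hn hk]
        refine ih.trans ?_
        simpa [CCEquiv] using cyc_chain (2 * n) (canonicalBraiding n (N.rotate k))
          (isChordWord_canonicalBraiding hk) []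
    refine (hrotchain k).trans ?_
    exact perm_ccEquiv (braiding_map_perm σ hσ (N.rotate k)).symm
      (pairwise_dis (isName_rotate hN k))
end

section
/- Let W_a = A(i_1,j_1)...A(i_n,j_n) be a chord word on m strands whose standard name is a name N of an n-diagram E, and let w_1,...,w_n ≥ 1 be integers. Then the chord word W = A(i_1,j_1)^{w_1}...A(i_n,j_n)^{w_n} on m strands (the r-th generator repeated w_r times consecutively, in place) is a braiding of the diagram represented by the blow-up of N with weights w_1,...,w_n. -/
/-! On every strand, the `r`-th generator of `Wa` contributes the index `r` to the standard
name; in the power word it becomes the `w r` consecutive copies occupying positions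
`w 1 + ⋯ + w (r - 1) + 1, …, w 1 + ⋯ + w r`, all with the same endpoints. Hence the standard
name of the power word is literally the blow-up of the standard name of `Wa`, and the
braiding is witnessed by the trivial rotation and relabeling. -/

namespace List

variable {α : Type*}

theorem filter_range_length_getD_eq_findIdxs (p : α → Bool) (d : α) (l : List α) :
    (range l.length).filter (fun q => p (l.getD q d)) = l.findIdxs p := by
  induction l with
  | nil => rfl
  | cons x l ih =>
    rw [length_cons, range_succ_eq_map, filter_cons, filter_map, findIdxs_cons, findIdxs_start,
      ← ih]
    simp [Function.comp_def]

theorem findIdxs_replicate (p : α → Bool) (k : ℕ) (x : α) :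
    (replicate k x).findIdxs p = if p x then range k else [] := by
  induction k with
  | zero => simp
  | succ k ih =>
    rw [replicate_succ', findIdxs_append, ih, findIdxs_singleton, length_replicate, range_succ]
    split <;> simp

theorem length_flatMap_range_replicate (g : ℕ → ℕ) (f : ℕ → α) (n : ℕ) :
    ((range n).flatMap fun r => replicate (g r) (f r)).length = ∑ r ∈ Finset.range n, g r := by
  induction n with
  | zero => simp
  | succ n ih => simp [range_succ, Finset.sum_range_succ, ih]

theorem findIdxs_flatMap_range_replicate (p : α → Bool) (g : ℕ → ℕ) (f : ℕ → α) (n : ℕ) :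
    ((range n).flatMap fun r => replicate (g r) (f r)).findIdxs p =
      ((range n).filter (p ∘ f)).flatMap
        fun r => (range (g r)).map ((∑ i ∈ Finset.range r, g i) + ·) := by
  induction n with
  | zero => simp
  | succ n ih =>
    rw [range_succ, flatMap_append, findIdxs_append, ih, flatMap_singleton, findIdxs_start,
      findIdxs_replicate, length_flatMap_range_replicate, filter_append, flatMap_append]
    by_cases h : p (f n) <;> simp [h, Nat.add_comm]

end List

theorem sameDiagram_refl (n : ℕ) (N : List ℕ) : SameDiagram n N N :=
  ⟨0, Equiv.refl ℕ, fun _ h1 h2 => ⟨h1, h2⟩, by simp⟩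

theorem IsChordWord.powerWord {m : ℕ} {Wa : List (ℕ × ℕ)} (h : IsChordWord m Wa) (w : ℕ → ℕ) :
    IsChordWord m (powerWord w Wa) := by
  intro p hp
  obtain ⟨r, hr, hp⟩ := List.mem_flatMap.1 hp
  rw [List.mem_replicate] at hp
  rw [hp.2, List.getD_eq_getElem _ _ (List.mem_range.1 hr)]
  exact h _ (List.getElem_mem _)

theorem standardName_eq_flatMap_findIdxs (m : ℕ) (W : List (ℕ × ℕ)) :
    standardName m W = (List.range m).flatMap fun s =>
      (W.findIdxs fun p => decide (p.1 = s + 1 ∨ p.2 = s + 1)).map (· + 1) := by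
  simp only [standardName, ← List.filter_range_length_getD_eq_findIdxs _ (0, 0)]

theorem standardName_powerWord (m : ℕ) (w : ℕ → ℕ) (Wa : List (ℕ × ℕ)) :
    standardName m (powerWord w Wa) = blowUp w (standardName m Wa) := by
  rw [standardName_eq_flatMap_findIdxs, standardName_eq_flatMap_findIdxs, blowUp,
    List.flatMap_assoc]
  refine List.flatMap_congr fun s _ => ?_
  rw [powerWord, List.findIdxs_flatMap_range_replicate, List.flatMap_map,
    ← List.filter_range_length_getD_eq_findIdxs _ (0, 0), List.map_flatMap]
  refine List.flatMap_congr fun r _ => ?_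
  rw [List.map_map, Finset.sum_Ico_eq_sum_range]
  simp [Function.comp_def, Nat.add_comm]

theorem powerWord_isBraiding_blowUp_general (m n : ℕ) (Wa : List (ℕ × ℕ))
    (hWa : IsChordWord m Wa)
    (w : ℕ → ℕ) :
    IsBraiding (∑ r ∈ Finset.Icc 1 n, w r) m (powerWord w Wa)
      (blowUp w (standardName m Wa)) :=
  ⟨hWa.powerWord w, standardName_powerWord m w Wa ▸ sameDiagram_refl _ _⟩

/-- If `Wa` is a chord word on `m` strands whose standard name is a name
`N` of an `n`-diagram `E`, and `w_1, …, w_n ≥ 1`, then the chord word obtained from `Wa`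
by repeating its `r`-th generator `w_r` times consecutively (in place) is a braiding of
the diagram represented by the blow-up of `N` with weights `w_1, …, w_n`. -/
theorem powerWord_isBraiding_blowUp (m n : ℕ) (Wa : List (ℕ × ℕ))
    (hWa : IsChordWord m Wa) (hn : n = Wa.length)
    (hname : IsName n (standardName m Wa))
    (w : ℕ → ℕ) (hw : ∀ r, 1 ≤ r → r ≤ n → 1 ≤ w r) :
    IsBraiding (∑ r ∈ Finset.Icc 1 n, w r) m (powerWord w Wa)
      (blowUp w (standardName m Wa)) :=
  powerWord_isBraiding_blowUp_general m n Wa hWa w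
end

section
/- For every n-diagram D, the braid index satisfies b(D) ≤ n + 1. -/
namespace BraidIndexAux
open List

lemma pairwise_filter_range (q : ℕ → Bool) (L : ℕ) : ((range L).filter q).Pairwise (· < ·) :=
  (pairwise_lt_range (n := L)).filter q

lemma mem_filter_range {q : ℕ → Bool} {L p : ℕ} :
    p ∈ (range L).filter q ↔ p < L ∧ q p = true := by
  simp [List.mem_filter]

lemma filt_len_lt (q : ℕ → Bool) {L p : ℕ} (hp : p < L) (hq : q p = true) :
    ((range p).filter q).length < ((range L).filter q).length := by
  have h2 : (range (p+1)).Sublist (range L) := range_sublist.2 hp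
  have := (h2.filter q).length_le
  rw [range_succ, filter_append] at this
  simp [hq] at this
  omega

lemma filt_getD (q : ℕ → Bool) {L p : ℕ} (hp : p < L) (hq : q p = true) :
    ((range L).filter q).getD (((range p).filter q).length) 0 = p := by
  induction L with
  | zero => omega
  | succ L ih =>
    rw [range_succ, filter_append]
    by_cases h : p < L
    · rw [List.getD_append _ _ _ _ (filt_len_lt q h hq)]
      exact ih h
    · have hpL : p = L := by omega
      subst hpL
      rw [List.getD_append_right _ _ _ _ (le_refl _)]
      simp [hq]

lemma filt_idx (q : ℕ → Bool) {L r : ℕ} (hr : r < ((range L).filter q).length) :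
    ((range (((range L).filter q).getD r 0)).filter q).length = r := by
  set F := (range L).filter q with hF
  have hnd : F.Nodup := (pairwise_filter_range q L).imp fun h => Nat.ne_of_lt h
  have hmem : F.getD r 0 ∈ F := by
    rw [List.getD_eq_getElem _ _ hr]; exact List.getElem_mem hr
  have h1 := mem_filter_range.1 (hF ▸ hmem)
  have hlt : ((range (F.getD r 0)).filter q).length < F.length := filt_len_lt q h1.1 h1.2
  have h2 : F.getD (((range (F.getD r 0)).filter q).length) 0 = F.getD r 0 :=
    filt_getD q h1.1 h1.2
  have h3 : F[((range (F.getD r 0)).filter q).length] = F[r] :=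
    (List.getD_eq_getElem F 0 hlt).symm.trans (h2.trans (List.getD_eq_getElem F 0 hr))
  exact (hnd.getElem_inj_iff).1 h3

lemma positionsOf_length (N : List ℕ) (x : ℕ) : (positionsOf N x).length = N.count x := by
  induction N with
  | nil => simp [positionsOf]
  | cons a l ih =>
    simp only [positionsOf, ← countP_eq_length_filter] at ih ⊢
    rw [List.length_cons, List.range_succ_eq_map, List.countP_cons, List.countP_map]
    have : ((fun p => decide ((a :: l).getD p 0 = x)) ∘ Nat.succ)
        = fun p => decide (l.getD p 0 = x) := by
      funext p; simp
    rw [this, ih, List.count_cons]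
    by_cases h : a = x <;> simp [h]

lemma mem_positionsOf {N : List ℕ} {x p : ℕ} :
    p ∈ positionsOf N x ↔ p < N.length ∧ N.getD p 0 = x := by
  simp [positionsOf, List.mem_filter]

open List

lemma flatMap_congr {α β : Type*} (l : List α) (f g : α → List β) (h : ∀ a ∈ l, f a = g a) :
    l.flatMap f = l.flatMap g := by
  rw [List.flatMap_def, List.flatMap_def, List.map_congr_left h]

lemma flatMap_filter_range {α : Type*} (f : ℕ → α) (g : ℕ → ℕ)
    (hmono : ∀ p q, p ≤ q → g p ≤ g q) :
    ∀ (L m : ℕ), (∀ p, p < L → g p < m) →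
    (List.range m).flatMap
        (fun s => ((List.range L).filter (fun p => decide (g p = s))).map f)
      = (List.range L).map f := by
  intro L
  induction L with
  | zero => intro m _; simp
  | succ L ih =>
    intro m hub
    have ht : g L < m := hub L (by omega)
    -- A s and B s
    set A : ℕ → List α := fun s => ((List.range L).filter (fun p => decide (g p = s))).map f
      with hA
    have key : ∀ s, ((List.range (L+1)).filter (fun p => decide (g p = s))).map f
        = A s ++ (if g L = s then [f L] else []) := by
      intro s
      rw [List.range_succ, List.filter_append, List.map_append, hA]
      congr 1
      by_cases h : g L = s <;> simp [h]
    have hAnil : ∀ s, g L < s → A s = [] := by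
      intro s hs
      rw [hA]
      have : (List.range L).filter (fun p => decide (g p = s)) = [] := by
        rw [List.filter_eq_nil_iff]
        intro a ha
        have := hmono a L (by have := List.mem_range.1 ha; omega)
        simp; omega
      simp [this]
    rw [flatMap_congr _ _ _ (fun s _ => key s)]
    -- split range m at g L + 1
    have hm : m = (g L + 1) + (m - g L - 1) := by omega
    rw [hm, List.range_add, List.flatMap_append, List.range_succ, List.flatMap_append]
    have h1 : (List.map (fun x => g L + 1 + x) (List.range (m - g L - 1))).flatMap
        (fun s => A s ++ (if g L = s then [f L] else [])) = [] := by
      rw [List.flatMap_eq_nil_iff]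
      intro x hx
      obtain ⟨y, _, rfl⟩ := List.mem_map.1 hx
      rw [hAnil _ (by omega)]
      simp; omega
    have h2 : (List.range (g L)).flatMap (fun s => A s ++ (if g L = s then [f L] else []))
        = (List.range (g L)).flatMap A := by
      apply flatMap_congr
      intro s hs
      have := List.mem_range.1 hs
      simp only [if_neg (by omega : ¬ g L = s)]
      simp
    have h3 : [g L].flatMap (fun s => A s ++ (if g L = s then [f L] else []))
        = A (g L) ++ [f L] := by simp
    rw [h1, h2, h3, List.append_nil]
    -- now reassemble : flatMap A over range (g L) ++ (A (g L) ++ [f L])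
    have h4 : (List.range m).flatMap A = (List.range (g L)).flatMap A ++ A (g L) := by
      rw [hm, List.range_add, List.flatMap_append, List.range_succ, List.flatMap_append]
      have : (List.map (fun x => g L + 1 + x) (List.range (m - g L - 1))).flatMap A = [] := by
        rw [List.flatMap_eq_nil_iff]
        intro x hx
        obtain ⟨y, _, rfl⟩ := List.mem_map.1 hx
        exact hAnil _ (by omega)
      rw [this, List.append_nil]
      simp
    have h5 := ih m (fun p hp => hub p (by omega))
    rw [← List.append_assoc, ← h4, h5, List.range_succ, List.map_append]
    simp

open List

def secB (N : List ℕ) (p : ℕ) : Bool := decide (∃ q, q < p ∧ N.getD q 0 = N.getD p 0)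
def notSecB (N : List ℕ) : ℕ → Bool := fun p => !secB N p
def dcnt (N : List ℕ) (p : ℕ) : ℕ := ((range (p+1)).filter (secB N)).length
def fpos (N : List ℕ) (x : ℕ) : ℕ := (positionsOf N x).getD 0 0
def spos (N : List ℕ) (x : ℕ) : ℕ := (positionsOf N x).getD 1 0
def tauF (N : List ℕ) (x : ℕ) : ℕ := ((range (fpos N x)).filter (notSecB N)).length + 1
def firstsL (N : List ℕ) : List ℕ := (range N.length).filter (notSecB N)
def FL (N : List ℕ) : List ℕ := (firstsL N).map (fun p => N.getD p 0)
def WW (N : List ℕ) : List (ℕ × ℕ) :=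
  (firstsL N).map fun p => (dcnt N p + 1, dcnt N (spos N (N.getD p 0)) + 1)

lemma secB_iff {N : List ℕ} {p : ℕ} :
    secB N p = true ↔ ∃ q, q < p ∧ N.getD q 0 = N.getD p 0 := by
  simp [secB]

section
variable {N : List ℕ} {x : ℕ}

lemma pos_pair (hx : N.count x = 2) :
    positionsOf N x = [fpos N x, spos N x] := by
  have hlen : (positionsOf N x).length = 2 := by rw [positionsOf_length, hx]
  obtain ⟨a, b, hab⟩ := List.length_eq_two.1 hlen
  rw [hab]
  simp [fpos, spos, hab]

lemma fpos_lt_spos (hx : N.count x = 2) : fpos N x < spos N x := by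
  have h := pairwise_filter_range (fun p => decide (N.getD p 0 = x)) N.length
  rw [show ((range N.length).filter fun p => decide (N.getD p 0 = x)) = positionsOf N x
    from rfl, pos_pair hx] at h
  rw [List.pairwise_cons] at h
  exact h.1 _ (by simp)

lemma fpos_mem (hx : N.count x = 2) : fpos N x < N.length ∧ N.getD (fpos N x) 0 = x := by
  have : fpos N x ∈ positionsOf N x := by rw [pos_pair hx]; simp
  exact mem_positionsOf.1 this

lemma spos_mem (hx : N.count x = 2) : spos N x < N.length ∧ N.getD (spos N x) 0 = x := by
  have : spos N x ∈ positionsOf N x := by rw [pos_pair hx]; simp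
  exact mem_positionsOf.1 this

lemma occ_eq (hx : N.count x = 2) {p : ℕ} (hp : p < N.length) (hv : N.getD p 0 = x) :
    p = fpos N x ∨ p = spos N x := by
  have : p ∈ positionsOf N x := mem_positionsOf.2 ⟨hp, hv⟩
  rw [pos_pair hx] at this
  simpa using this

lemma secB_spos (hx : N.count x = 2) : secB N (spos N x) = true :=
  secB_iff.2 ⟨fpos N x, fpos_lt_spos hx, (fpos_mem hx).2.trans (spos_mem hx).2.symm⟩

lemma secB_fpos (hx : N.count x = 2) : secB N (fpos N x) = false := by
  by_contra h
  obtain ⟨q, hq, hv⟩ := secB_iff.1 (by simpa using h)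
  have hql : q < N.length := hq.trans (fpos_mem hx).1
  have := occ_eq hx hql (hv.trans (fpos_mem hx).2)
  have := fpos_lt_spos hx
  omega

end

section
variable {n : ℕ} {N : List ℕ}

lemma mem_name (hN : IsName n N) {x : ℕ} (hx : x ∈ N) : 1 ≤ x ∧ x ≤ n := by
  by_contra h
  have hxIcc : x ∉ Finset.Icc 1 n := by
    simp only [Finset.mem_Icc]; tauto
  have hsub : insert x (Finset.Icc 1 n) ⊆ N.toFinset := by
    intro y hy
    rcases Finset.mem_insert.1 hy with rfl | hy
    · exact List.mem_toFinset.2 hx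
    · have := hN.2 y (Finset.mem_Icc.1 hy).1 (Finset.mem_Icc.1 hy).2
      exact List.mem_toFinset.2 (List.count_pos_iff.1 (by omega))
  have hsum : ∑ a ∈ N.toFinset, N.count a = N.length := by
    simpa using Multiset.toFinset_sum_count_eq (↑N : Multiset ℕ)
  have hle : ∑ a ∈ insert x (Finset.Icc 1 n), N.count a ≤ ∑ a ∈ N.toFinset, N.count a :=
    Finset.sum_le_sum_of_subset hsub
  rw [Finset.sum_insert hxIcc] at hle
  have hIccsum : ∑ a ∈ Finset.Icc 1 n, N.count a = 2 * n := by
    rw [Finset.sum_congr rfl fun a ha => hN.2 a (Finset.mem_Icc.1 ha).1 (Finset.mem_Icc.1 ha).2]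
    simp [Nat.card_Icc, Nat.mul_comm]
  have hcx : 0 < N.count x := List.count_pos_iff.2 hx
  rw [hIccsum, hsum, hN.1] at hle
  omega

lemma getD_mem_name (hN : IsName n N) {p : ℕ} (hp : p < N.length) :
    N.count (N.getD p 0) = 2 := by
  have hx : N.getD p 0 ∈ N := by
    rw [List.getD_eq_getElem _ _ hp]; exact List.getElem_mem hp
  have := mem_name hN hx
  exact hN.2 _ this.1 this.2

lemma dcnt_mono {p q : ℕ} (h : p ≤ q) : dcnt N p ≤ dcnt N q :=
  ((range_sublist.2 (by omega)).filter (secB N)).length_le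

lemma dcnt_strict {p q : ℕ} (h : p < q) (hq : secB N q = true) : dcnt N p < dcnt N q := by
  have h1 : dcnt N p ≤ ((range q).filter (secB N)).length :=
    ((range_sublist.2 (by omega)).filter (secB N)).length_le
  have h2 := filt_len_lt (secB N) (show q < q + 1 by omega) hq
  exact lt_of_le_of_lt h1 h2

lemma mem_firstsL {p : ℕ} : p ∈ firstsL N ↔ p < N.length ∧ secB N p = false := by
  rw [firstsL, mem_filter_range]
  simp [notSecB]

lemma fpos_of_first (hN : IsName n N) {p : ℕ} (hp : p < N.length) (hs : secB N p = false) :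
    fpos N (N.getD p 0) = p := by
  have hc := getD_mem_name hN hp
  rcases occ_eq hc hp rfl with h | h
  · omega
  · have h2 := secB_spos hc
    rw [← h] at h2
    rw [h2] at hs
    exact absurd hs (by simp)

lemma FL_nodup (hN : IsName n N) : (FL N).Nodup := by
  rw [FL, List.Nodup, List.pairwise_map]
  refine ((pairwise_filter_range _ _).imp_of_mem ?_ : _)
  intro p p' hp hp' hlt heq
  have h1 := mem_firstsL.1 (show p ∈ firstsL N from hp)
  have h2 := mem_firstsL.1 (show p' ∈ firstsL N from hp')
  have e1 := fpos_of_first hN h1.1 h1.2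
  have e2 := fpos_of_first hN h2.1 h2.2
  rw [heq] at e1
  omega

lemma mem_FL (hN : IsName n N) {x : ℕ} : x ∈ FL N ↔ 1 ≤ x ∧ x ≤ n := by
  constructor
  · intro hx
    obtain ⟨p, hp, rfl⟩ := List.mem_map.1 hx
    have h1 := mem_firstsL.1 hp
    refine mem_name hN ?_
    rw [List.getD_eq_getElem _ _ h1.1]; exact List.getElem_mem h1.1
  · intro hx
    have hc := hN.2 x hx.1 hx.2
    refine List.mem_map.2 ⟨fpos N x, ?_, (fpos_mem hc).2⟩
    exact mem_firstsL.2 ⟨(fpos_mem hc).1, secB_fpos hc⟩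

lemma FL_length (hN : IsName n N) : (FL N).length = n := by
  have h1 : (FL N).toFinset = Finset.Icc 1 n := by
    ext x
    rw [List.mem_toFinset, mem_FL hN, Finset.mem_Icc]
  have h2 := List.toFinset_card_of_nodup (FL_nodup hN)
  rw [h1] at h2
  rw [← h2, Nat.card_Icc]
  omega

lemma firstsL_length (hN : IsName n N) : (firstsL N).length = n := by
  have := FL_length hN
  rwa [FL, List.length_map] at this

lemma WW_length (hN : IsName n N) : (WW N).length = n := by
  rw [WW, List.length_map]; exact firstsL_length hN

lemma dcnt_le (hN : IsName n N) {p : ℕ} (hp : p < N.length) : dcnt N p ≤ n := by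
  have hsplit := List.length_eq_length_filter_add (l := range N.length) (secB N)
  have hfir : ((range N.length).filter (fun a => !secB N a)).length = n := firstsL_length hN
  have h1 : dcnt N p ≤ ((range N.length).filter (secB N)).length :=
    ((range_sublist.2 (by omega)).filter (secB N)).length_le
  rw [List.length_range] at hsplit
  have hl := hN.1
  omega

lemma tauF_le (hN : IsName n N) {x : ℕ} (hx : N.count x = 2) : tauF N x ≤ n := by
  have := filt_len_lt (notSecB N) (fpos_mem hx).1 (by simp [notSecB, secB_fpos hx])
  have h2 : ((range N.length).filter (notSecB N)).length = n := firstsL_length hN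
  rw [h2] at this
  rw [tauF]
  omega

lemma tauF_strict {x y : ℕ} (hx : N.count x = 2) (h : fpos N x < fpos N y) :
    tauF N x < tauF N y := by
  have := filt_len_lt (notSecB N) h (by simp [notSecB, secB_fpos hx])
  rw [tauF, tauF]
  omega

lemma firstsL_getD_tau {x : ℕ} (hx : N.count x = 2) :
    (firstsL N).getD (tauF N x - 1) 0 = fpos N x := by
  have h : tauF N x - 1 = ((range (fpos N x)).filter (notSecB N)).length := by rw [tauF]; omega
  rw [h, firstsL]
  exact filt_getD (notSecB N) (fpos_mem hx).1 (by simp [notSecB, secB_fpos hx])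

lemma tau_of_idx (hN : IsName n N) {r : ℕ} (hr : r < n) :
    tauF N (N.getD ((firstsL N).getD r 0) 0) = r + 1 := by
  have hrl : r < ((range N.length).filter (notSecB N)).length := by
    rw [show ((range N.length).filter (notSecB N)) = firstsL N from rfl, firstsL_length hN]
    exact hr
  have hmem : (firstsL N).getD r 0 ∈ firstsL N := by
    rw [List.getD_eq_getElem _ _ (by rw [firstsL_length hN]; exact hr)]
    exact List.getElem_mem _
  have h1 := mem_firstsL.1 hmem
  have h2 := fpos_of_first hN h1.1 h1.2
  rw [tauF, h2]
  have h3 := filt_idx (notSecB N) hrl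
  rw [show ((range N.length).filter (notSecB N)).getD r 0 = (firstsL N).getD r 0 from rfl] at h3
  omega

end

section
variable {n : ℕ} {N : List ℕ}

lemma WW_getD (hN : IsName n N) {r : ℕ} (hr : r < n) :
    (WW N).getD r (0, 0) =
      (dcnt N ((firstsL N).getD r 0) + 1,
       dcnt N (spos N (N.getD ((firstsL N).getD r 0) 0)) + 1) := by
  have h1 : r < (firstsL N).length := by rw [firstsL_length hN]; exact hr
  have h2 : r < (WW N).length := by rw [WW_length hN]; exact hr
  rw [List.getD_eq_getElem _ _ h2]
  simp only [WW, List.getElem_map]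
  rw [List.getD_eq_getElem _ _ h1]

lemma block_eq (hN : IsName n N) (s : ℕ) :
    ((range (WW N).length).filter
        (fun r => decide (((WW N).getD r (0, 0)).1 = s + 1 ∨ ((WW N).getD r (0, 0)).2 = s + 1))).map
        (· + 1)
      = ((range N.length).filter (fun p => decide (dcnt N p = s))).map
          (fun p => tauF N (N.getD p 0)) := by
  have hmemL : ∀ v, (v ∈ ((range (WW N).length).filter
      (fun r => decide (((WW N).getD r (0, 0)).1 = s + 1 ∨ ((WW N).getD r (0, 0)).2 = s + 1))).map
      (· + 1)) ↔
      (v ∈ ((range N.length).filter (fun p => decide (dcnt N p = s))).map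
        (fun p => tauF N (N.getD p 0))) := by
    intro v
    simp only [List.mem_map, mem_filter_range, decide_eq_true_eq, WW_length hN]
    constructor
    · rintro ⟨r, ⟨hr, hor⟩, rfl⟩
      rw [WW_getD hN hr] at hor
      set p0 := (firstsL N).getD r 0 with hp0
      have hmem : p0 ∈ firstsL N := by
        rw [hp0, List.getD_eq_getElem _ _ (by rw [firstsL_length hN]; exact hr)]
        exact List.getElem_mem _
      have h1 := mem_firstsL.1 hmem
      have hc := getD_mem_name hN h1.1
      have htau := tau_of_idx hN hr
      rcases hor with h | h
      · exact ⟨p0, ⟨h1.1, by simpa using h⟩, htau⟩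
      · refine ⟨spos N (N.getD p0 0), ⟨(spos_mem hc).1, by simpa using h⟩, ?_⟩
        rw [(spos_mem hc).2]
        exact htau
    · rintro ⟨p, ⟨hp, hd⟩, rfl⟩
      have hc := getD_mem_name hN hp
      set x := N.getD p 0 with hx
      have htle := tauF_le hN hc
      have htge : 1 ≤ tauF N x := by rw [tauF]; omega
      refine ⟨tauF N x - 1, ⟨by omega, ?_⟩, by omega⟩
      rw [WW_getD hN (by omega), firstsL_getD_tau hc]
      rw [(fpos_mem hc).2]
      rcases occ_eq hc hp rfl with h | h
      · left; rw [← h, hd]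
      · right; rw [← h, hd]
  have hndL : (((range (WW N).length).filter
      (fun r => decide (((WW N).getD r (0, 0)).1 = s + 1 ∨ ((WW N).getD r (0, 0)).2 = s + 1))).map
      (· + 1)).Pairwise (· < ·) := by
    rw [List.pairwise_map]
    exact (pairwise_filter_range _ _).imp (by omega)
  have hndR : (((range N.length).filter (fun p => decide (dcnt N p = s))).map
      (fun p => tauF N (N.getD p 0))).Pairwise (· < ·) := by
    rw [List.pairwise_map]
    refine ((pairwise_filter_range _ _).imp_of_mem ?_ : _)
    intro p p' hp hp' hlt
    have h1 := mem_filter_range.1 hp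
    have h2 := mem_filter_range.1 hp'
    rw [decide_eq_true_eq] at *
    have hc := getD_mem_name hN h1.1
    have hc' := getD_mem_name hN h2.1
    -- p' is a first occurrence
    have hsec : secB N p' = false := by
      by_contra hcon
      have := dcnt_strict hlt (by simpa using hcon)
      omega
    have he' : fpos N (N.getD p' 0) = p' := fpos_of_first hN h2.1 hsec
    have hle : fpos N (N.getD p 0) ≤ p := by
      rcases occ_eq hc h1.1 rfl with h | h
      · omega
      · have := fpos_lt_spos hc; omega
    exact tauF_strict hc (by omega)
  refine List.Perm.eq_of_pairwise' hndL hndR ?_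
  refine List.perm_of_nodup_nodup_toFinset_eq ?_ ?_ ?_
  · exact hndL.imp fun h => Nat.ne_of_lt h
  · exact hndR.imp fun h => Nat.ne_of_lt h
  · ext v
    rw [List.mem_toFinset, List.mem_toFinset]
    exact hmemL v

end

lemma map_getD_range (M : List ℕ) (f : ℕ → ℕ) :
    (range M.length).map (fun p => f (M.getD p 0)) = M.map f := by
  apply List.ext_getElem
  · simp
  · intro i h1 h2
    have hi : i < M.length := by simpa using h2
    simp only [List.getElem_map, List.getElem_range]
    rw [List.getD_eq_getElem _ _ hi]

section
variable {n : ℕ} {N : List ℕ}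

lemma standardName_WW (hN : IsName n N) :
    standardName (n + 1) (WW N) = N.map (tauF N) := by
  unfold standardName
  rw [flatMap_congr _ _ _ (fun s _ => block_eq hN s)]
  rw [flatMap_filter_range (fun p => tauF N (N.getD p 0)) (dcnt N)
    (fun p q h => dcnt_mono h) N.length (n + 1)
    (fun p hp => lt_of_le_of_lt (dcnt_le hN hp) (by omega))]
  exact map_getD_range N (tauF N)

/-- the relabeling permutation -/
def sigmaP (n : ℕ) (N : List ℕ) (hN : IsName n N) : Equiv.Perm ℕ where
  toFun := fun v => if 1 ≤ v ∧ v ≤ n then (FL N).getD (v - 1) 0 else v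
  invFun := fun x => if 1 ≤ x ∧ x ≤ n then tauF N x else x
  left_inv := by
    intro v
    beta_reduce
    by_cases hv : 1 ≤ v ∧ v ≤ n
    · rw [if_pos hv]
      have hlt : v - 1 < (FL N).length := by rw [FL_length hN]; omega
      have hmem : (FL N).getD (v - 1) 0 ∈ FL N := by
        rw [List.getD_eq_getElem _ _ hlt]; exact List.getElem_mem _
      have hIcc := (mem_FL hN).1 hmem
      rw [if_pos hIcc]
      have hlt' : v - 1 < (firstsL N).length := by rw [firstsL_length hN]; omega
      have hFL : (FL N).getD (v - 1) 0 = N.getD ((firstsL N).getD (v - 1) 0) 0 := by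
        rw [List.getD_eq_getElem _ _ hlt, List.getD_eq_getElem _ _ hlt']
        simp [FL, List.getElem_map]
      rw [hFL, tau_of_idx hN (by omega : v - 1 < n)]
      omega
    · rw [if_neg hv, if_neg hv]
  right_inv := by
    intro x
    beta_reduce
    by_cases hx : 1 ≤ x ∧ x ≤ n
    · rw [if_pos hx]
      have hc := hN.2 x hx.1 hx.2
      have h1 : 1 ≤ tauF N x ∧ tauF N x ≤ n := ⟨by rw [tauF]; omega, tauF_le hN hc⟩
      rw [if_pos h1]
      have hlt : tauF N x - 1 < (FL N).length := by rw [FL_length hN]; omega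
      have hlt' : tauF N x - 1 < (firstsL N).length := by rw [firstsL_length hN]; omega
      rw [List.getD_eq_getElem _ _ hlt]
      have : (FL N)[tauF N x - 1] = N.getD ((firstsL N).getD (tauF N x - 1) 0) 0 := by
        rw [List.getD_eq_getElem _ _ hlt']
        simp [FL, List.getElem_map]
      rw [this, firstsL_getD_tau hc, (fpos_mem hc).2]
    · rw [if_neg hx, if_neg hx]

lemma sigmaP_maps (hN : IsName n N) :
    ∀ x, 1 ≤ x → x ≤ n → 1 ≤ sigmaP n N hN x ∧ sigmaP n N hN x ≤ n := by
  intro x h1 h2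
  show 1 ≤ (if 1 ≤ x ∧ x ≤ n then (FL N).getD (x - 1) 0 else x) ∧
      (if 1 ≤ x ∧ x ≤ n then (FL N).getD (x - 1) 0 else x) ≤ n
  rw [if_pos ⟨h1, h2⟩]
  have hlt : x - 1 < (FL N).length := by rw [FL_length hN]; omega
  have hmem : (FL N).getD (x - 1) 0 ∈ FL N := by
    rw [List.getD_eq_getElem _ _ hlt]; exact List.getElem_mem _
  exact (mem_FL hN).1 hmem

lemma sigmaP_tau (hN : IsName n N) {x : ℕ} (hx : x ∈ N) :
    sigmaP n N hN (tauF N x) = x := by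
  have hIcc := mem_name hN hx
  have := (sigmaP n N hN).right_inv x
  show sigmaP n N hN (tauF N x) = x
  have hinv : (sigmaP n N hN).symm x = tauF N x := by
    show (if 1 ≤ x ∧ x ≤ n then tauF N x else x) = tauF N x
    rw [if_pos hIcc]
  rw [← hinv]
  exact (sigmaP n N hN).apply_symm_apply x

lemma isChordWord_WW (hN : IsName n N) : IsChordWord (n + 1) (WW N) := by
  intro c hc
  obtain ⟨p, hp, rfl⟩ := List.mem_map.1 hc
  have h1 := mem_firstsL.1 hp
  have hc2 := getD_mem_name hN h1.1
  have hfp : fpos N (N.getD p 0) = p := fpos_of_first hN h1.1 h1.2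
  have hlt : p < spos N (N.getD p 0) := by
    have := fpos_lt_spos hc2; omega
  have hstr : dcnt N p < dcnt N (spos N (N.getD p 0)) :=
    dcnt_strict hlt (secB_spos hc2)
  have hub : dcnt N (spos N (N.getD p 0)) ≤ n := dcnt_le hN (spos_mem hc2).1
  exact ⟨by omega, by simpa using hstr, by simpa using Nat.add_le_add_right hub 1⟩

end

end BraidIndexAux

/-- The braid index of an `n`-diagram is at most `n + 1`. -/
theorem braidIndex_le (n : ℕ) (N : List ℕ) (hN : IsName n N) :
    braidIndex n N ≤ n + 1 := by
  apply Nat.sInf_le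
  refine ⟨by omega, BraidIndexAux.WW N, BraidIndexAux.isChordWord_WW hN, 0, BraidIndexAux.sigmaP n N hN,
    BraidIndexAux.sigmaP_maps hN, ?_⟩
  rw [List.rotate_zero, BraidIndexAux.standardName_WW hN, List.map_map]
  symm
  exact (List.map_congr_left fun x hx => BraidIndexAux.sigmaP_tau hN hx).trans (List.map_id N)
end

section
/- Let V = U·V' and W = U·W' be chord words on 3 strands with a common prefix U of length at least 2, such that V and W have equal standard names and both are braidings of a common amalgamated diagram. Then V' = W', i.e. V and W are identical words. -/
namespace ThreeBraidAux

/-- The block of the standard name for strand `s+1`. -/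
def blk (s : ℕ) (X : List (ℕ × ℕ)) : List ℕ :=
  ((List.range X.length).filter
      (fun r => decide ((X.getD r (0, 0)).1 = s + 1 ∨ (X.getD r (0, 0)).2 = s + 1))).map (· + 1)

lemma sn3 (X : List (ℕ × ℕ)) : standardName 3 X = blk 0 X ++ blk 1 X ++ blk 2 X := by
  simp [standardName, blk, List.range_succ]

lemma blk_mem (s : ℕ) (X : List (ℕ×ℕ)) (e : ℕ) : e ∈ blk s X ↔
    ∃ r, r < X.length ∧ e = r + 1 ∧ ((X.getD r (0,0)).1 = s+1 ∨ (X.getD r (0,0)).2 = s+1) := by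
  simp only [blk, List.mem_map, List.mem_filter, List.mem_range, decide_eq_true_iff]
  constructor
  · rintro ⟨r, ⟨hr, hc⟩, rfl⟩; exact ⟨r, hr, rfl, hc⟩
  · rintro ⟨r, hr, rfl, hc⟩; exact ⟨r, ⟨hr, hc⟩, rfl⟩

lemma blk_sorted (s : ℕ) (X : List (ℕ×ℕ)) : (blk s X).Pairwise (· < ·) := by
  unfold blk
  refine List.Pairwise.map _ (fun a b h => Nat.add_lt_add_right h 1) ?_
  exact List.pairwise_lt_range.filter _

lemma getD_agree (V W : List (ℕ×ℕ)) (u r : ℕ) (hpre : V.take u = W.take u) (hr : r < u)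
    (d : ℕ×ℕ) : V.getD r d = W.getD r d := by
  have h1 : (V.take u).getD r d = V.getD r d := by
    simp [List.getD_eq_getElem?_getD, List.getElem?_take, hr]
  have h2 : (W.take u).getD r d = W.getD r d := by
    simp [List.getD_eq_getElem?_getD, List.getElem?_take, hr]
  rw [← h1, ← h2, hpre]

lemma blk_filter_agree (s u : ℕ) (V W : List (ℕ×ℕ)) (hpre : V.take u = W.take u)
    (huV : u ≤ V.length) (huW : u ≤ W.length) :
    (blk s V).filter (fun e => decide (e ≤ u)) = (blk s W).filter (fun e => decide (e ≤ u)) := by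
  have sV := ((blk_sorted s V).filter (fun e => decide (e ≤ u)))
  have sW := ((blk_sorted s W).filter (fun e => decide (e ≤ u)))
  refine List.Perm.eq_of_pairwise' (sV.imp le_of_lt) (sW.imp le_of_lt) ?_
  rw [List.perm_ext_iff_of_nodup (sV.imp ?_) (sW.imp ?_)]
  · intro a
    simp only [List.mem_filter, blk_mem, decide_eq_true_iff]
    constructor
    · rintro ⟨⟨r, hr, rfl, hc⟩, hle⟩
      exact ⟨⟨r, by omega, rfl, by rw [← getD_agree V W u r hpre (by omega)]; exact hc⟩, hle⟩
    · rintro ⟨⟨r, hr, rfl, hc⟩, hle⟩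
      exact ⟨⟨r, by omega, rfl, by rw [getD_agree V W u r hpre (by omega)]; exact hc⟩, hle⟩
  · exact fun h => Nat.ne_of_lt h
  · exact fun h => Nat.ne_of_lt h

lemma blk_start (s : ℕ) (X : List (ℕ×ℕ)) (h2 : 2 ≤ X.length)
    (h0 : (X.getD 0 (0,0)).1 = s+1 ∨ (X.getD 0 (0,0)).2 = s+1)
    (h1 : (X.getD 1 (0,0)).1 = s+1 ∨ (X.getD 1 (0,0)).2 = s+1) :
    ∃ A, blk s X = 1 :: 2 :: A := by
  obtain ⟨n, hn⟩ : ∃ n, X.length = n + 2 := ⟨X.length - 2, by omega⟩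
  exact ⟨_, by unfold blk; rw [hn, List.range_succ_eq_map, List.range_succ_eq_map, List.map_cons,
    List.filter_cons_of_pos (by simpa using h0), List.filter_cons_of_pos (by simpa using h1),
    List.map_cons, List.map_cons]⟩

lemma sorted_pos_gt (l : List ℕ) (u r : ℕ) (hl : l.Pairwise (· < ·))
    (hc : (l.filter (fun e => decide (e ≤ u))).length ≤ r) (hr : r < l.length) :
    u < l.getD r 0 := by
  by_contra h
  push_neg at h
  rw [List.getD_eq_getElem l 0 hr] at h
  have key : ∀ e ∈ l.take (r+1), (fun e => decide (e ≤ u)) e = true := by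
    intro e he
    rw [List.mem_take_iff_getElem] at he
    obtain ⟨i, hm, rfl⟩ := he
    have hi : i < l.length := lt_of_lt_of_le hm (min_le_right _ _)
    simp only [decide_eq_true_iff]
    rcases eq_or_lt_of_le (Nat.lt_succ_iff.mp (lt_of_lt_of_le hm (min_le_left _ _))) with h2 | h2
    · subst h2; exact h
    · exact le_of_lt (lt_of_lt_of_le (List.pairwise_iff_getElem.mp hl i r hi hr h2) h)
  have h2 : r + 1 ≤ (l.filter (fun e => decide (e ≤ u))).length := by
    calc r + 1 = (l.take (r+1)).length := by rw [List.length_take]; omega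
    _ = ((l.take (r+1)).filter (fun e => decide (e ≤ u))).length := by
        rw [List.filter_eq_self.mpr key]
    _ ≤ _ := ((l.take_sublist (r+1)).filter _).length_le
  omega

lemma sorted_head_min (l : List ℕ) (x : ℕ) (hl : l.Pairwise (· < ·)) (hx : x ∈ l) :
    l.getD 0 0 ≤ x := by
  obtain ⟨i, hi, rfl⟩ := List.mem_iff_getElem.mp hx
  have h0 : 0 < l.length := by omega
  rw [List.getD_eq_getElem l 0 h0]
  rcases Nat.eq_zero_or_pos i with h | h
  · subst h; exact le_refl _
  · exact le_of_lt (List.pairwise_iff_getElem.mp hl 0 i h0 hi h)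

lemma untouched (s u : ℕ) (X : List (ℕ×ℕ)) (hu : u ≤ X.length)
    (h : ∀ e ∈ blk s X, u < e) :
    ∀ r < u, ¬((X.getD r (0,0)).1 = s+1 ∨ (X.getD r (0,0)).2 = s+1) := by
  intro r hr hc
  have hm : r + 1 ∈ blk s X := (blk_mem s X (r+1)).2 ⟨r, by omega, rfl, hc⟩
  have := h _ hm
  omega

lemma sn_le (V W : List (ℕ×ℕ)) (hW : IsChordWord 3 W)
    (hname : standardName 3 V = standardName 3 W) : W.length ≤ V.length := by
  by_contra h
  push_neg at h
  have hlt : W.length - 1 < W.length := by omega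
  have hp : W.getD (W.length - 1) (0,0) ∈ W := by
    rw [List.getD_eq_getElem _ _ hlt]; exact List.getElem_mem _
  obtain ⟨ha, hb, hc⟩ := hW _ hp
  have hm : W.length ∈ blk ((W.getD (W.length - 1) (0,0)).1 - 1) W :=
    (blk_mem _ _ _).2 ⟨W.length - 1, hlt, by omega, Or.inl (by omega)⟩
  have hmem : W.length ∈ standardName 3 W := by
    rcases (show (W.getD (W.length - 1) (0,0)).1 - 1 = 0 ∨
        (W.getD (W.length - 1) (0,0)).1 - 1 = 1 from by omega) with hs | hs <;>
      rw [hs] at hm <;> simp only [sn3, List.mem_append] <;> tauto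
  rw [← hname] at hmem
  simp only [sn3, List.mem_append, blk_mem] at hmem
  rcases hmem with (⟨r, hr, he, -⟩ | ⟨r, hr, he, -⟩) | ⟨r, hr, he, -⟩ <;> omega

lemma words_eq (V W : List (ℕ×ℕ)) (hV : IsChordWord 3 V) (hW : IsChordWord 3 W)
    (hlen : V.length = W.length) (hb : ∀ s, s < 3 → blk s V = blk s W) : V = W := by
  apply List.ext_getElem hlen
  intro r hr hr'
  have hpV : V.getD r (0,0) ∈ V := by
    rw [List.getD_eq_getElem _ _ hr]; exact List.getElem_mem _
  have hpW : W.getD r (0,0) ∈ W := by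
    rw [List.getD_eq_getElem _ _ hr']; exact List.getElem_mem _
  obtain ⟨ha1, ha2, ha3⟩ := hV _ hpV
  obtain ⟨hb1, hb2, hb3⟩ := hW _ hpW
  have m1 : r + 1 ∈ blk ((V.getD r (0,0)).1 - 1) V :=
    (blk_mem _ _ _).2 ⟨r, hr, rfl, Or.inl (by omega)⟩
  have m2 : r + 1 ∈ blk ((V.getD r (0,0)).2 - 1) V :=
    (blk_mem _ _ _).2 ⟨r, hr, rfl, Or.inr (by omega)⟩
  rw [hb _ (by omega)] at m1
  rw [hb _ (by omega)] at m2
  obtain ⟨r1, hr1, he1, hc1⟩ := (blk_mem _ _ _).1 m1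
  obtain ⟨r2, hr2, he2, hc2⟩ := (blk_mem _ _ _).1 m2
  have hr1r : r1 = r := by omega
  have hr2r : r2 = r := by omega
  rw [hr1r] at hc1; rw [hr2r] at hc2
  rw [← List.getD_eq_getElem V (0,0) hr, ← List.getD_eq_getElem W (0,0) hr']
  have e1 : (V.getD r (0,0)).1 - 1 + 1 = (V.getD r (0,0)).1 := by omega
  have e2 : (V.getD r (0,0)).2 - 1 + 1 = (V.getD r (0,0)).2 := by omega
  rw [e1] at hc1; rw [e2] at hc2
  have hfin : (V.getD r (0,0)).1 = (W.getD r (0,0)).1 ∧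
      (V.getD r (0,0)).2 = (W.getD r (0,0)).2 := by omega
  exact Prod.ext hfin.1 hfin.2

lemma auxA (u : ℕ) (hu : 2 ≤ u) (V W : List (ℕ×ℕ)) (hV : IsChordWord 3 V)
    (hpre : V.take u = W.take u) (huV : u ≤ V.length) (huW : u ≤ W.length)
    (hname : standardName 3 V = standardName 3 W)
    (hb : (blk 0 V).length < (blk 0 W).length) :
    ∃ A B, standardName 3 V = 1 :: 2 :: (A ++ 1 :: 2 :: B) := by
  have eq1 : blk 0 V ++ (blk 1 V ++ blk 2 V) = blk 0 W ++ (blk 1 W ++ blk 2 W) := by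
    have h := hname; rw [sn3, sn3] at h; simpa [List.append_assoc] using h
  have hblen : (blk 0 V).length + (blk 1 V ++ blk 2 V).length
      = (blk 0 W).length + (blk 1 W ++ blk 2 W).length := by
    have := congrArg List.length eq1; simpa using this
  have heW : (blk 0 V ++ (blk 1 V ++ blk 2 V)).getD (blk 0 V).length 0
      = (blk 0 W).getD (blk 0 V).length 0 := by
    rw [eq1, List.getD_append _ _ _ _ hb]
  have heV : (blk 0 V ++ (blk 1 V ++ blk 2 V)).getD (blk 0 V).length 0
      = (blk 1 V ++ blk 2 V).getD 0 0 := by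
    rw [List.getD_append_right _ _ _ _ (le_refl _), Nat.sub_self]
  have hue : u < (blk 1 V ++ blk 2 V).getD 0 0 := by
    rw [← heV, heW]
    apply sorted_pos_gt _ _ _ (blk_sorted 0 W) _ hb
    rw [← blk_filter_agree 0 u V W hpre huV huW]
    exact List.length_filter_le _ _
  by_cases h1 : blk 1 V = []
  · exfalso
    have h2all : ∀ x ∈ blk 2 V, u < x := by
      intro x hx
      have hh : (blk 2 V).getD 0 0 ≤ x := sorted_head_min _ _ (blk_sorted 2 V) hx
      rw [h1, List.nil_append] at hue
      omega
    have h1all : ∀ x ∈ blk 1 V, u < x := by rw [h1]; simp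
    have u1 := untouched 1 u V huV h1all
    have u2 := untouched 2 u V huV h2all
    have hp : V.getD 0 (0,0) ∈ V := by
      rw [List.getD_eq_getElem _ _ (by omega)]; exact List.getElem_mem _
    obtain ⟨ha, hb', hc⟩ := hV _ hp
    have n1 := u1 0 (by omega)
    have n2 := u2 0 (by omega)
    simp only [not_or] at n1 n2
    omega
  · have h1all : ∀ x ∈ blk 1 V, u < x := by
      intro x hx
      have hh : (blk 1 V).getD 0 0 ≤ x := sorted_head_min _ _ (blk_sorted 1 V) hx
      rw [List.getD_append _ _ _ _ (List.length_pos_iff.mpr h1)] at hue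
      omega
    have u1 := untouched 1 u V huV h1all
    have key2 : ∀ r, r < u → (V.getD r (0,0)).1 = 1 ∧ (V.getD r (0,0)).2 = 3 := by
      intro r hr
      have hp : V.getD r (0,0) ∈ V := by
        rw [List.getD_eq_getElem _ _ (by omega)]; exact List.getElem_mem _
      obtain ⟨ha, hb', hc⟩ := hV _ hp
      have hn := u1 r hr
      simp only [not_or] at hn
      omega
    obtain ⟨A0, hA0⟩ := blk_start 0 V (by omega) (Or.inl (by rw [(key2 0 (by omega)).1]))
        (Or.inl (by rw [(key2 1 (by omega)).1]))
    obtain ⟨A2, hA2⟩ := blk_start 2 V (by omega) (Or.inr (by rw [(key2 0 (by omega)).2]))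
        (Or.inr (by rw [(key2 1 (by omega)).2]))
    refine ⟨A0 ++ blk 1 V, A2, ?_⟩
    rw [sn3, hA0, hA2]
    simp [List.append_assoc]

lemma auxB (u : ℕ) (hu : 2 ≤ u) (V W : List (ℕ×ℕ)) (hV : IsChordWord 3 V)
    (hpre : V.take u = W.take u) (huV : u ≤ V.length) (huW : u ≤ W.length)
    (hname : standardName 3 V = standardName 3 W)
    (hb0 : (blk 0 V).length = (blk 0 W).length)
    (hb : (blk 1 V).length < (blk 1 W).length) :
    ∃ A B, standardName 3 V = 1 :: 2 :: (A ++ 1 :: 2 :: B) := by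
  have eq1 : blk 0 V ++ (blk 1 V ++ blk 2 V) = blk 0 W ++ (blk 1 W ++ blk 2 W) := by
    have h := hname; rw [sn3, sn3] at h; simpa [List.append_assoc] using h
  obtain ⟨-, eq2⟩ := List.append_inj eq1 hb0
  have hblen : (blk 1 V).length + (blk 2 V).length
      = (blk 1 W).length + (blk 2 W).length := by
    have := congrArg List.length eq2; simpa using this
  have heW : (blk 1 V ++ blk 2 V).getD (blk 1 V).length 0
      = (blk 1 W).getD (blk 1 V).length 0 := by
    rw [eq2, List.getD_append _ _ _ _ hb]
  have heV : (blk 1 V ++ blk 2 V).getD (blk 1 V).length 0 = (blk 2 V).getD 0 0 := by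
    rw [List.getD_append_right _ _ _ _ (le_refl _), Nat.sub_self]
  have hue : u < (blk 2 V).getD 0 0 := by
    rw [← heV, heW]
    apply sorted_pos_gt _ _ _ (blk_sorted 1 W) _ hb
    rw [← blk_filter_agree 1 u V W hpre huV huW]
    exact List.length_filter_le _ _
  have h2all : ∀ x ∈ blk 2 V, u < x := fun x hx =>
    lt_of_lt_of_le hue (sorted_head_min _ _ (blk_sorted 2 V) hx)
  have u2 := untouched 2 u V huV h2all
  have key2 : ∀ r, r < u → (V.getD r (0,0)).1 = 1 ∧ (V.getD r (0,0)).2 = 2 := by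
    intro r hr
    have hp : V.getD r (0,0) ∈ V := by
      rw [List.getD_eq_getElem _ _ (by omega)]; exact List.getElem_mem _
    obtain ⟨ha, hb', hc⟩ := hV _ hp
    have hn := u2 r hr
    simp only [not_or] at hn
    omega
  obtain ⟨A0, hA0⟩ := blk_start 0 V (by omega) (Or.inl (by rw [(key2 0 (by omega)).1]))
      (Or.inl (by rw [(key2 1 (by omega)).1]))
  obtain ⟨A1, hA1⟩ := blk_start 1 V (by omega) (Or.inr (by rw [(key2 0 (by omega)).2]))
      (Or.inr (by rw [(key2 1 (by omega)).2]))
  refine ⟨A0, A1 ++ blk 2 V, ?_⟩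
  rw [sn3, hA0, hA1]
  simp [List.append_assoc]

lemma key (u : ℕ) (hu : 2 ≤ u) (V W : List (ℕ×ℕ)) (hV : IsChordWord 3 V)
    (hW : IsChordWord 3 W) (hpre : V.take u = W.take u)
    (huV : u ≤ V.length) (huW : u ≤ W.length)
    (hname : standardName 3 V = standardName 3 W) :
    V = W ∨ ∃ A B, standardName 3 V = 1 :: 2 :: (A ++ 1 :: 2 :: B) := by
  rcases lt_trichotomy (blk 0 V).length (blk 0 W).length with h | h | h
  · exact Or.inr (auxA u hu V W hV hpre huV huW hname h)
  · rcases lt_trichotomy (blk 1 V).length (blk 1 W).length with h1 | h1 | h1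
    · exact Or.inr (auxB u hu V W hV hpre huV huW hname h h1)
    · left
      have hlen : V.length = W.length :=
        le_antisymm (sn_le W V hV hname.symm) (sn_le V W hW hname)
      apply words_eq V W hV hW hlen
      have eq1 : blk 0 V ++ (blk 1 V ++ blk 2 V) = blk 0 W ++ (blk 1 W ++ blk 2 W) := by
        have hh := hname; rw [sn3, sn3] at hh; simpa [List.append_assoc] using hh
      obtain ⟨e0, eq2⟩ := List.append_inj eq1 h
      obtain ⟨e1, e2⟩ := List.append_inj eq2 h1
      intro s hs
      interval_cases s <;> assumption
    · right; rw [hname]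
      exact auxB u hu W V hW hpre.symm huW huV hname.symm h.symm h1
  · right; rw [hname]
    exact auxA u hu W V hW hpre.symm huW huV hname.symm h

lemma sd_symm (n : ℕ) (N M : List ℕ) (h : SameDiagram n N M) : SameDiagram n M N := by
  obtain ⟨k, σ, hσ, hM⟩ := h
  refine ⟨N.length * (k+1) - k, σ⁻¹, ?_, ?_⟩
  · intro x hx1 hx2
    have himg : (Finset.Icc 1 n).image σ = Finset.Icc 1 n := by
      apply Finset.eq_of_subset_of_card_le
      · intro y hy
        obtain ⟨z, hz, rfl⟩ := Finset.mem_image.mp hy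
        rw [Finset.mem_Icc] at hz ⊢
        exact hσ z hz.1 hz.2
      · rw [Finset.card_image_of_injective _ σ.injective]
    have hx : x ∈ (Finset.Icc 1 n).image σ := by rw [himg, Finset.mem_Icc]; exact ⟨hx1, hx2⟩
    obtain ⟨z, hz, hzx⟩ := Finset.mem_image.mp hx
    have hz' : σ⁻¹ x = z := by rw [← hzx]; simp
    rw [hz']
    exact Finset.mem_Icc.mp hz
  · subst hM
    rw [(List.map_rotate σ (N.rotate k) _).symm]
    rcases Nat.eq_zero_or_pos N.length with h0 | h0
    · have hN : N = [] := List.length_eq_zero_iff.mp h0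
      subst hN; simp
    · have hk : k + 1 ≤ N.length * (k+1) := Nat.le_mul_of_pos_left (k+1) h0
      rw [List.rotate_rotate,
        show k + (N.length * (k+1) - k) = N.length * (k+1) from by omega,
        List.rotate_length_mul, List.map_map,
        show (⇑σ⁻¹ ∘ ⇑σ) = id from funext fun x => by simp, List.map_id]

end ThreeBraidAux

/-- If `V = U·V'` and `W = U·W'` are chord words on 3 strands with a
common prefix `U` of length at least 2, with equal standard names, both braidings of a
common amalgamated diagram, then `V' = W'`. -/
theorem threeBraid_common_prefix (U V' W' : List (ℕ × ℕ)) (hU : 2 ≤ U.length)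
    (hV : IsChordWord 3 (U ++ V')) (hW : IsChordWord 3 (U ++ W'))
    (hname : standardName 3 (U ++ V') = standardName 3 (U ++ W'))
    (n : ℕ) (N : List ℕ) (hN : IsName n N) (hamal : Amalgamated n N)
    (hbV : SameDiagram n (standardName 3 (U ++ V')) N)
    (hbW : SameDiagram n (standardName 3 (U ++ W')) N) :
    V' = W' := by
  have hpre : (U ++ V').take U.length = (U ++ W').take U.length := by
    rw [List.take_left, List.take_left]
  have huV : U.length ≤ (U ++ V').length := by simp
  have huW : U.length ≤ (U ++ W').length := by simp
  rcases ThreeBraidAux.key U.length hU _ _ hV hW hpre huV huW hname with h | ⟨A, B, hAB⟩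
  · exact List.append_cancel_left h
  · exfalso
    apply hamal
    refine ⟨1, 2, A, B, by norm_num, ?_⟩
    rw [← hAB]
    exact ThreeBraidAux.sd_symm n _ N hbV
end

section
/- For every m ≥ 2, the quotient vector space A_m is spanned by the images of the chord words on m strands all of whose generators are of the form A(i,m) with 1 ≤ i ≤ m-1. -/
/-- The type of chord words on `m` strands. -/
abbrev ChordWord (m : ℕ) := {W : List (ℕ × ℕ) // IsChordWord m W}

/-- The free `ℚ`-vector space `F_m` with basis the set of chord words on `m` strands. -/
abbrev FreeChord (m : ℕ) := ChordWord m →₀ ℚ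

/-- The basis vector of `F_m` corresponding to a chord word. -/
noncomputable def gen (m : ℕ) (W : ChordWord m) : FreeChord m := Finsupp.single W 1

/-- The generator `A(p,q)`, with the convention `A(p,q) = A(q,p)` when `p > q`. -/
def mkA (p q : ℕ) : ℕ × ℕ := (min p q, max p q)

/-- The relators defining `A_m`: commutation, four-term and cyclic permutation
relations. -/
def Relators (m : ℕ) : Set (FreeChord m) :=
  {x |
    -- commutation relators
    (∃ (W₁ W₂ : ChordWord m) (U V : List (ℕ × ℕ)) (i j k l : ℕ),
      i ≠ k ∧ i ≠ l ∧ j ≠ k ∧ j ≠ l ∧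
      W₁.1 = U ++ (i, j) :: (k, l) :: V ∧ W₂.1 = U ++ (k, l) :: (i, j) :: V ∧
      x = gen m W₁ - gen m W₂) ∨
    -- four-term relators
    (∃ (W₁ W₂ W₃ W₄ : ChordWord m) (U V : List (ℕ × ℕ)) (i j k : ℕ),
      i ≠ j ∧ j ≠ k ∧ i ≠ k ∧
      W₁.1 = U ++ mkA i j :: mkA j k :: V ∧
      W₂.1 = U ++ mkA j k :: mkA i j :: V ∧
      W₃.1 = U ++ mkA i j :: mkA i k :: V ∧
      W₄.1 = U ++ mkA i k :: mkA i j :: V ∧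
      x = gen m W₁ - gen m W₂ + gen m W₃ - gen m W₄) ∨
    -- cyclic permutation relators
    (∃ (W₁ W₂ : ChordWord m) (U : List (ℕ × ℕ)) (i j : ℕ),
      ((j < m ∧ W₁.1 = U ++ [(i, j)] ∧ W₂.1 = (i + 1, j + 1) :: U) ∨
        (W₁.1 = U ++ [(i, m)] ∧ W₂.1 = (1, i + 1) :: U)) ∧
      x = gen m W₁ - gen m W₂)}
namespace AmSpanAux

/-- A chord is *bad* if it does not touch strand `m`. -/
def bad (m : ℕ) (p : ℕ × ℕ) : Bool := decide (p.2 ≠ m)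

def badCount (m : ℕ) (L : List (ℕ × ℕ)) : ℕ := L.countP (bad m)

def goodCount (m : ℕ) (L : List (ℕ × ℕ)) : ℕ := L.countP (fun p => decide (p.2 = m))

def badSum (m : ℕ) (L : List (ℕ × ℕ)) : ℕ := (L.map fun p => m - p.2).sum

/-- number of (bad, good) inversions: pairs where a bad chord precedes a good one. -/
def invm (m : ℕ) : List (ℕ × ℕ) → ℕ
  | [] => 0
  | p :: L => invm m L + (if p.2 ≠ m then goodCount m L else 0)

lemma goodCount_cons (m : ℕ) (p : ℕ × ℕ) (L : List (ℕ × ℕ)) :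
    goodCount m (p :: L) = goodCount m L + (if p.2 = m then 1 else 0) := by
  simp [goodCount, List.countP_cons]

lemma badCount_cons (m : ℕ) (p : ℕ × ℕ) (L : List (ℕ × ℕ)) :
    badCount m (p :: L) = badCount m L + (if p.2 ≠ m then 1 else 0) := by
  by_cases h : p.2 = m <;> simp [badCount, List.countP_cons, bad, h]

lemma badCount_append (m : ℕ) (U L : List (ℕ × ℕ)) :
    badCount m (U ++ L) = badCount m U + badCount m L := by
  simp [badCount, List.countP_append]

lemma goodCount_append (m : ℕ) (U L : List (ℕ × ℕ)) :
    goodCount m (U ++ L) = goodCount m U + goodCount m L := by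
  simp [goodCount, List.countP_append]

lemma badSum_append (m : ℕ) (U L : List (ℕ × ℕ)) :
    badSum m (U ++ L) = badSum m U + badSum m L := by
  simp [badSum]

lemma badSum_cons (m : ℕ) (p : ℕ × ℕ) (L : List (ℕ × ℕ)) :
    badSum m (p :: L) = (m - p.2) + badSum m L := by
  simp [badSum]

lemma invm_append (m : ℕ) (U L : List (ℕ × ℕ)) :
    invm m (U ++ L) = invm m U + invm m L + badCount m U * goodCount m L := by
  induction U with
  | nil => simp [invm, badCount]
  | cons p U ih =>
      by_cases hp : p.2 = m <;>
        simp [invm, ih, badCount_cons, goodCount_append, hp] <;> ring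

lemma goodCount_add_badCount (m : ℕ) (L : List (ℕ × ℕ)) :
    goodCount m L + badCount m L = L.length := by
  induction L with
  | nil => simp [goodCount, badCount]
  | cons p L ih =>
      by_cases hp : p.2 = m <;> simp [goodCount_cons, badCount_cons, hp] <;> omega

end AmSpanAux
namespace AmSpanAux

lemma exists_adjacent (m : ℕ) (L : List (ℕ × ℕ)) (h : 0 < invm m L) :
    ∃ U x y V, L = U ++ x :: y :: V ∧ x.2 ≠ m ∧ y.2 = m := by
  induction L with
  | nil => simp [invm] at h
  | cons p L ih =>
      rcases Nat.eq_zero_or_pos (invm m L) with h0 | hpos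
      · have hp : p.2 ≠ m ∧ 0 < goodCount m L := by
          by_cases hp2 : p.2 = m
          · simp [invm, hp2, h0] at h
          · refine ⟨hp2, ?_⟩
            simp [invm, hp2, h0] at h
            omega
        match L, hp.2 with
        | q :: L', _ =>
          by_cases hq : q.2 = m
          · exact ⟨[], p, q, L', rfl, hp.1, hq⟩
          · exfalso
            have : goodCount m (q :: L') = goodCount m L' := by
              simp [goodCount_cons, hq]
            have h1 : 0 < goodCount m L' := by
              have := hp.2; omega
            have : 0 < invm m (q :: L') := by
              simp [invm, hq]; omega
            omega
      · obtain ⟨U, x, y, V, hL, hx, hy⟩ := ih hpos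
        exact ⟨p :: U, x, y, V, by simp [hL], hx, hy⟩

lemma exists_last_bad (m : ℕ) (L : List (ℕ × ℕ)) (h0 : invm m L = 0)
    (hb : 0 < badCount m L) : ∃ U x, L = U ++ [x] ∧ x.2 ≠ m := by
  induction L with
  | nil => simp [badCount] at hb
  | cons p L ih =>
      have hinvL : invm m L = 0 := by
        have : invm m (p :: L) = invm m L + _ := rfl
        omega
      rcases Nat.eq_zero_or_pos (badCount m L) with hbL | hbL
      · have hp : p.2 ≠ m := by
          by_cases hp2 : p.2 = m
          · rw [badCount_cons] at hb; simp [hp2] at hb; omega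
          · exact hp2
        match L, hbL with
        | [], _ => exact ⟨[], p, rfl, hp⟩
        | q :: L', hbL =>
          exfalso
          have hg : goodCount m (q :: L') + badCount m (q :: L') = (q :: L').length :=
            goodCount_add_badCount m _
          have : 0 < goodCount m (q :: L') := by simp at hg ⊢; omega
          have : 0 < invm m (p :: (q :: L')) := by simp [invm, hp]; omega
          omega
      · obtain ⟨U, x, hL, hx⟩ := ih hinvL hbL
        exact ⟨p :: U, x, by simp [hL], hx⟩

end AmSpanAux
namespace AmSpanAux

variable {m : ℕ}

lemma mkQ_rel {x : FreeChord m} (hx : x ∈ Relators m) :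
    (Submodule.span ℚ (Relators m)).mkQ x = 0 := by
  rw [Submodule.mkQ_apply]
  exact (Submodule.Quotient.mk_eq_zero _).2 (Submodule.subset_span hx)

lemma comm_eq (W₁ W₂ : ChordWord m) (U V : List (ℕ × ℕ)) (i j k l : ℕ)
    (h1 : i ≠ k) (h2 : i ≠ l) (h3 : j ≠ k) (h4 : j ≠ l)
    (e1 : W₁.1 = U ++ (i, j) :: (k, l) :: V) (e2 : W₂.1 = U ++ (k, l) :: (i, j) :: V) :
    (Submodule.span ℚ (Relators m)).mkQ (gen m W₁) =
      (Submodule.span ℚ (Relators m)).mkQ (gen m W₂) := by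
  have hrel : gen m W₁ - gen m W₂ ∈ Relators m :=
    Or.inl ⟨W₁, W₂, U, V, i, j, k, l, h1, h2, h3, h4, e1, e2, rfl⟩
  have h0 := mkQ_rel hrel
  rw [map_sub] at h0
  exact sub_eq_zero.mp h0

lemma cyc_eq (W₁ W₂ : ChordWord m) (U : List (ℕ × ℕ)) (i j : ℕ) (hj : j < m)
    (e1 : W₁.1 = U ++ [(i, j)]) (e2 : W₂.1 = (i + 1, j + 1) :: U) :
    (Submodule.span ℚ (Relators m)).mkQ (gen m W₁) =
      (Submodule.span ℚ (Relators m)).mkQ (gen m W₂) := by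
  have hrel : gen m W₁ - gen m W₂ ∈ Relators m :=
    Or.inr (Or.inr ⟨W₁, W₂, U, i, j, Or.inl ⟨hj, e1, e2⟩, rfl⟩)
  have h0 := mkQ_rel hrel
  rw [map_sub] at h0
  exact sub_eq_zero.mp h0

lemma fourT_eq (W₁ W₂ W₃ W₄ : ChordWord m) (U V : List (ℕ × ℕ)) (a b c : ℕ)
    (hab : a ≠ b) (hbc : b ≠ c) (hac : a ≠ c)
    (e1 : W₁.1 = U ++ mkA a b :: mkA b c :: V)
    (e2 : W₂.1 = U ++ mkA b c :: mkA a b :: V)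
    (e3 : W₃.1 = U ++ mkA a b :: mkA a c :: V)
    (e4 : W₄.1 = U ++ mkA a c :: mkA a b :: V) :
    (Submodule.span ℚ (Relators m)).mkQ (gen m W₂) =
      (Submodule.span ℚ (Relators m)).mkQ (gen m W₁) +
        (Submodule.span ℚ (Relators m)).mkQ (gen m W₃) -
          (Submodule.span ℚ (Relators m)).mkQ (gen m W₄) := by
  have hrel : gen m W₁ - gen m W₂ + gen m W₃ - gen m W₄ ∈ Relators m :=
    Or.inr (Or.inl ⟨W₁, W₂, W₃, W₄, U, V, a, b, c, hab, hbc, hac, e1, e2, e3, e4, rfl⟩)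
  have h0 := mkQ_rel hrel
  rw [map_sub, map_add, map_sub] at h0
  set π := (Submodule.span ℚ (Relators m)).mkQ
  have : π (gen m W₂) - (π (gen m W₁) + π (gen m W₃) - π (gen m W₄)) = 0 := by
    rw [← neg_eq_zero, ← h0]; abel
  exact sub_eq_zero.mp this

end AmSpanAux
namespace AmSpanAux

lemma mkA_of_lt {p q : ℕ} (h : p < q) : mkA p q = (p, q) := by
  simp only [mkA, Prod.mk.injEq]; omega

lemma mkA_of_gt {p q : ℕ} (h : q < p) : mkA p q = (q, p) := by
  simp only [mkA, Prod.mk.injEq]; omega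

lemma chord2 {m : ℕ} {U V : List (ℕ × ℕ)} {x y c d : ℕ × ℕ}
    (h : IsChordWord m (U ++ x :: y :: V))
    (hc : 1 ≤ c.1 ∧ c.1 < c.2 ∧ c.2 ≤ m) (hd : 1 ≤ d.1 ∧ d.1 < d.2 ∧ d.2 ≤ m) :
    IsChordWord m (U ++ c :: d :: V) := by
  intro p hp
  simp only [List.mem_append, List.mem_cons] at hp
  rcases hp with h1 | h1 | h1 | h1
  · exact h p (by simp [h1])
  · subst h1; exact hc
  · subst h1; exact hd
  · exact h p (by simp [h1])

lemma badCount_mid (m : ℕ) (U V : List (ℕ × ℕ)) (x y : ℕ × ℕ) :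
    badCount m (U ++ x :: y :: V) = badCount m U + badCount m V +
      ((if x.2 ≠ m then 1 else 0) + (if y.2 ≠ m then 1 else 0)) := by
  simp [badCount_append, badCount_cons]; omega

lemma badSum_mid (m : ℕ) (U V : List (ℕ × ℕ)) (x y : ℕ × ℕ) :
    badSum m (U ++ x :: y :: V) = badSum m U + badSum m V + ((m - x.2) + (m - y.2)) := by
  simp [badSum_append, badSum_cons]; omega

lemma invm_swap (m : ℕ) (U V : List (ℕ × ℕ)) (x y : ℕ × ℕ)
    (hx : x.2 ≠ m) (hy : y.2 = m) :
    invm m (U ++ y :: x :: V) + 1 = invm m (U ++ x :: y :: V) := by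
  have h1 : invm m (x :: y :: V) = invm m V + goodCount m V + 1 := by
    simp [invm, goodCount_cons, hx, hy]; omega
  have h2 : invm m (y :: x :: V) = invm m V + goodCount m V := by
    simp [invm, goodCount_cons, hx, hy]
  have h3 : goodCount m (x :: y :: V) = goodCount m (y :: x :: V) := by
    simp [goodCount_cons]; omega
  rw [invm_append, invm_append, h1, h2, h3]
  ring

end AmSpanAux
namespace AmSpanAux

noncomputable def oneBlockTarget (m : ℕ) :
    Submodule ℚ (FreeChord m ⧸ Submodule.span ℚ (Relators m)) :=
  Submodule.span ℚ ((Submodule.span ℚ (Relators m)).mkQ ''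
    {x | ∃ W : ChordWord m, (∀ p ∈ W.1, p.2 = m) ∧ x = gen m W})

lemma key (m : ℕ) :
    ∀ b s v (W : ChordWord m), badCount m W.1 = b → badSum m W.1 = s → invm m W.1 = v →
      (Submodule.span ℚ (Relators m)).mkQ (gen m W) ∈ oneBlockTarget m := by
  intro b
  induction b using Nat.strong_induction_on with
  | _ b IHb =>
  intro s
  induction s using Nat.strong_induction_on with
  | _ s IHs =>
  intro v
  induction v using Nat.strong_induction_on with
  | _ v IHv =>
  intro W hb hs hv
  rcases Nat.eq_zero_or_pos b with hb0 | hbpos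
  · -- no bad chords: `W` is a one-block word
    subst hb0
    have hob : ∀ p ∈ W.1, p.2 = m := by
      intro p hp
      have h2 := List.countP_eq_zero.mp hb p hp
      simpa [bad] using h2
    exact Submodule.subset_span ⟨gen m W, ⟨W, hob, rfl⟩, rfl⟩
  rcases Nat.eq_zero_or_pos v with hv0 | hvpos
  · -- no inversions: the last chord is bad; apply the cyclic relator
    subst hv0
    obtain ⟨U, x, hWeq, hx⟩ := exists_last_bad m W.1 hv (hb ▸ hbpos)
    obtain ⟨i, j⟩ := x
    have hxmem : (i, j) ∈ W.1 := by rw [hWeq]; simp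
    obtain ⟨hi1, hij, hjm⟩ := W.2 _ hxmem
    have hx' : j ≠ m := hx
    have hjlt : j < m := lt_of_le_of_ne hjm hx'
    have hU : IsChordWord m ((i + 1, j + 1) :: U) := by
      intro p hp
      rcases List.mem_cons.mp hp with h1 | h1
      · subst h1; exact ⟨by omega, by omega, by omega⟩
      · exact W.2 p (by rw [hWeq]; exact List.mem_append_left _ h1)
    have heq := cyc_eq W ⟨_, hU⟩ U i j hjlt hWeq rfl
    rw [heq]
    have hbW : badCount m W.1 = badCount m U + 1 := by
      rw [hWeq, badCount_append, badCount_cons]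
      simp [badCount, hx']
    have hsW : badSum m W.1 = badSum m U + (m - j) := by
      rw [hWeq, badSum_append]; simp [badSum]
    by_cases hjm1 : j + 1 = m
    · have hlt : badCount m ((i + 1, j + 1) :: U) < b := by
        rw [badCount_cons]; simp [hjm1]; omega
      exact IHb _ hlt _ _ ⟨_, hU⟩ rfl rfl rfl
    · have hbc : badCount m ((i + 1, j + 1) :: U) = b := by
        rw [badCount_cons]; simp [hjm1]; omega
      have hlt : badSum m ((i + 1, j + 1) :: U) < s := by
        rw [badSum_cons]; simp; omega
      exact IHs _ hlt _ ⟨_, hU⟩ hbc rfl rfl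
  · -- there is an adjacent (bad, good) pair
    obtain ⟨U, x, y, V, hWeq, hx, hy⟩ := exists_adjacent m W.1 (hv ▸ hvpos)
    obtain ⟨i, j⟩ := x
    obtain ⟨k, y2⟩ := y
    have hy' : y2 = m := hy
    subst y2
    have hx' : j ≠ m := hx
    have hxmem : (i, j) ∈ W.1 := by rw [hWeq]; simp
    have hymem : (k, m) ∈ W.1 := by rw [hWeq]; simp
    obtain ⟨hi1, hij, hjm⟩ := W.2 _ hxmem
    obtain ⟨hk1, hkm, -⟩ := W.2 _ hymem
    have hjlt : j < m := lt_of_le_of_ne hjm hx'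
    have hWC : IsChordWord m (U ++ (i, j) :: (k, m) :: V) := hWeq ▸ W.2
    rw [hWeq] at hb hs hv
    rcases eq_or_ne k i with hki | hki
    · -- k = i : four-term relation with (a, b, c) = (m, i, j)
      subst hki
      have hj1 : 1 ≤ j := by omega
      set W₁ : ChordWord m := ⟨U ++ (k, m) :: (k, j) :: V,
        chord2 hWC ⟨hk1, hkm, le_refl m⟩ ⟨hi1, hij, hjm⟩⟩ with hW₁
      set W₃ : ChordWord m := ⟨U ++ (k, m) :: (j, m) :: V,
        chord2 hWC ⟨hk1, hkm, le_refl m⟩ ⟨hj1, hjlt, le_refl m⟩⟩ with hW₃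
      set W₄ : ChordWord m := ⟨U ++ (j, m) :: (k, m) :: V,
        chord2 hWC ⟨hj1, hjlt, le_refl m⟩ ⟨hk1, hkm, le_refl m⟩⟩ with hW₄
      have heq := fourT_eq W₁ W W₃ W₄ U V m k j (by omega) (by omega) (by omega)
        (by rw [mkA_of_gt hkm, mkA_of_lt hij])
        (by rw [mkA_of_lt hij, mkA_of_gt hkm]; exact hWeq)
        (by rw [mkA_of_gt hkm, mkA_of_gt hjlt])
        (by rw [mkA_of_gt hjlt, mkA_of_gt hkm])
      rw [heq]
      rw [badCount_mid] at hb
      simp [hx'] at hb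
      refine sub_mem (add_mem ?_ ?_) ?_
      · -- swapped word: one fewer inversion
        have hb1 : badCount m W₁.1 = b := by
          show badCount m (U ++ (k, m) :: (k, j) :: V) = b
          rw [badCount_mid]; simp [hx']; omega
        have hs1 : badSum m W₁.1 = s := by
          show badSum m (U ++ (k, m) :: (k, j) :: V) = s
          rw [badSum_mid]; rw [badSum_mid] at hs; omega
        have hv1 : invm m W₁.1 < v := by
          have h9 := invm_swap m U V (k, j) (k, m) hx' rfl
          show invm m (U ++ (k, m) :: (k, j) :: V) < v
          omega
        exact IHv _ hv1 W₁ hb1 hs1 rfl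
      · have hlt : badCount m W₃.1 < b := by
          show badCount m (U ++ (k, m) :: (j, m) :: V) < b
          rw [badCount_mid]; simp; omega
        exact IHb _ hlt _ _ W₃ rfl rfl rfl
      · have hlt : badCount m W₄.1 < b := by
          show badCount m (U ++ (j, m) :: (k, m) :: V) < b
          rw [badCount_mid]; simp; omega
        exact IHb _ hlt _ _ W₄ rfl rfl rfl
    · rcases eq_or_ne k j with hkj | hkj
      · -- k = j : four-term relation with (a, b, c) = (m, j, i)
        subst hkj
        have hj1 : 1 ≤ k := by omega
        have him : i < m := by omega
        set W₁ : ChordWord m := ⟨U ++ (k, m) :: (i, k) :: V,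
          chord2 hWC ⟨hj1, hkm, le_refl m⟩ ⟨hi1, hij, hjm⟩⟩ with hW₁
        set W₃ : ChordWord m := ⟨U ++ (k, m) :: (i, m) :: V,
          chord2 hWC ⟨hj1, hkm, le_refl m⟩ ⟨hi1, him, le_refl m⟩⟩ with hW₃
        set W₄ : ChordWord m := ⟨U ++ (i, m) :: (k, m) :: V,
          chord2 hWC ⟨hi1, him, le_refl m⟩ ⟨hj1, hkm, le_refl m⟩⟩ with hW₄
        have heq := fourT_eq W₁ W W₃ W₄ U V m k i (by omega) (by omega) (by omega)
          (by rw [mkA_of_gt hkm, mkA_of_gt hij])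
          (by rw [mkA_of_gt hij, mkA_of_gt hkm]; exact hWeq)
          (by rw [mkA_of_gt hkm, mkA_of_gt him])
          (by rw [mkA_of_gt him, mkA_of_gt hkm])
        rw [heq]
        rw [badCount_mid] at hb
        simp [hx'] at hb
        refine sub_mem (add_mem ?_ ?_) ?_
        · have hb1 : badCount m W₁.1 = b := by
            show badCount m (U ++ (k, m) :: (i, k) :: V) = b
            rw [badCount_mid]; simp [hx']; omega
          have hs1 : badSum m W₁.1 = s := by
            show badSum m (U ++ (k, m) :: (i, k) :: V) = s
            rw [badSum_mid]; rw [badSum_mid] at hs; omega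
          have hv1 : invm m W₁.1 < v := by
            have h9 := invm_swap m U V (i, k) (k, m) hx' rfl
            show invm m (U ++ (k, m) :: (i, k) :: V) < v
            omega
          exact IHv _ hv1 W₁ hb1 hs1 rfl
        · have hlt : badCount m W₃.1 < b := by
            show badCount m (U ++ (k, m) :: (i, m) :: V) < b
            rw [badCount_mid]; simp; omega
          exact IHb _ hlt _ _ W₃ rfl rfl rfl
        · have hlt : badCount m W₄.1 < b := by
            show badCount m (U ++ (i, m) :: (k, m) :: V) < b
            rw [badCount_mid]; simp; omega
          exact IHb _ hlt _ _ W₄ rfl rfl rfl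
      · -- disjoint chords: commutation relator
        set W' : ChordWord m := ⟨U ++ (k, m) :: (i, j) :: V,
          chord2 hWC ⟨hk1, hkm, le_refl m⟩ ⟨hi1, hij, hjm⟩⟩ with hW'
        have heq := comm_eq W W' U V i j k m (fun h => hki (h ▸ rfl))
          (by omega) (fun h => hkj (h ▸ rfl)) hx' hWeq rfl
        rw [heq]
        have hb1 : badCount m W'.1 = b := by
          show badCount m (U ++ (k, m) :: (i, j) :: V) = b
          rw [badCount_mid]; rw [badCount_mid] at hb; simp [hx'] at hb ⊢; omega
        have hs1 : badSum m W'.1 = s := by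
          show badSum m (U ++ (k, m) :: (i, j) :: V) = s
          rw [badSum_mid]; rw [badSum_mid] at hs; omega
        have hv1 : invm m W'.1 < v := by
          have h9 := invm_swap m U V (i, j) (k, m) hx' rfl
          show invm m (U ++ (k, m) :: (i, j) :: V) < v
          omega
        exact IHv _ hv1 W' hb1 hs1 rfl

end AmSpanAux

/-- For every `m ≥ 2`, the quotient space
`A_m = F_m / span(Relators m)` is spanned by the images of the one-block chord words on
`m` strands, i.e. those all of whose generators are of the form `A(i,m)`. -/
theorem Am_spanned_by_oneBlock (m : ℕ) (hm : 2 ≤ m) :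
    Submodule.span ℚ
        ((Submodule.span ℚ (Relators m)).mkQ ''
          {x | ∃ W : ChordWord m, (∀ p ∈ W.1, p.2 = m) ∧ x = gen m W}) = ⊤ := by
  rw [eq_top_iff]
  rintro y -
  obtain ⟨x, rfl⟩ := Submodule.mkQ_surjective _ y
  induction x using Finsupp.induction_linear with
  | zero => simpa using (Submodule.span ℚ _).zero_mem
  | add f g hf hg => rw [map_add]; exact add_mem hf hg
  | single W c =>
      have h1 : (Finsupp.single W c : FreeChord m) = c • gen m W := by
        simp [gen, Finsupp.smul_single]
      rw [h1, map_smul]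
      exact Submodule.smul_mem _ c (AmSpanAux.key m _ _ _ W rfl rfl rfl)
end

section
/- Let m ≥ 2 and let W be a chord word on m strands all of whose generators are of the form A(i,m) with 1 ≤ i ≤ m-1 (a one-block word). Then in the diagram represented by the chord word A(1,m)·W, the chord corresponding to the initial generator A(1,m) is a special chord: it crosses every other chord of the diagram, i.e. in the standard name read from A(1,m)·W the two occurrences of the label 1 interleave with the two occurrences of every other label. -/
/-!
The name read from `A(1,m)·W` is the concatenation of the label blocks of the strands
`1, …, m`. The chord `1` is the first generator and has endpoints on strands `1` and `m`,
so it opens both the first and the last block. In a one-block word every generator ends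
on strand `m`, so the last block holds every label; a label `r ≥ 2` also occurs in the
block of the other endpoint of its chord, which lies strictly before the last block.
Hence the name has the shape `1 ⋯ r ⋯ 1 ⋯ r ⋯`.
-/

/-- The block of strand `s` in the standard name; labels are 1-based generator indices. -/
def strandLabels (W : List (ℕ × ℕ)) (s : ℕ) : List ℕ :=
  ((List.range W.length).filter
      (fun r => decide ((W.getD r (0, 0)).1 = s ∨ (W.getD r (0, 0)).2 = s))).map (· + 1)

theorem standardName_eq_flatMap (m : ℕ) (W : List (ℕ × ℕ)) :
    standardName m W = (List.range m).flatMap fun s => strandLabels W (s + 1) :=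
  rfl

theorem standardName_succ (m : ℕ) (W : List (ℕ × ℕ)) :
    standardName (m + 1) W = standardName m W ++ strandLabels W (m + 1) := by
  rw [standardName_eq_flatMap, standardName_eq_flatMap, List.range_succ,
    List.flatMap_append, List.flatMap_singleton]

theorem strandLabels_prefix_standardName {m : ℕ} (W : List (ℕ × ℕ)) (hm : 1 ≤ m) :
    strandLabels W 1 <+: standardName m W := by
  obtain ⟨n, rfl⟩ : ∃ n, m = n + 1 := ⟨m - 1, by omega⟩
  rw [standardName_eq_flatMap, List.range_succ_eq_map, List.flatMap_cons]
  exact List.prefix_append _ _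

theorem mem_standardName {m s r : ℕ} {W : List (ℕ × ℕ)} (hs : 1 ≤ s) (hsm : s ≤ m)
    (hr : r ∈ strandLabels W s) : r ∈ standardName m W :=
  List.mem_flatMap.2 ⟨s - 1, List.mem_range.2 (by omega), by rwa [Nat.sub_add_cancel hs]⟩

theorem mem_strandLabels {W : List (ℕ × ℕ)} {s r : ℕ} (hr : r < W.length)
    (hs : W[r].1 = s ∨ W[r].2 = s) : r + 1 ∈ strandLabels W s := by
  simp only [strandLabels, List.mem_map, List.mem_filter, List.mem_range]
  exact ⟨r, ⟨hr, decide_eq_true (by rwa [List.getD_eq_getElem _ _ hr])⟩, rfl⟩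

theorem strandLabels_cons_of_touches {p : ℕ × ℕ} (W : List (ℕ × ℕ)) {s : ℕ}
    (hp : p.1 = s ∨ p.2 = s) :
    strandLabels (p :: W) s = 1 :: (strandLabels W s).map (· + 1) := by
  simp [strandLabels, List.range_succ_eq_map, List.filter_map, hp, Function.comp_def]

theorem crosses_of_eq_append {N L₁ L₂ : List ℕ} {a b : ℕ} (hN : N = a :: L₁ ++ a :: L₂)
    (h₁ : b ∈ L₁) (h₂ : b ∈ L₂) : Crosses N a b :=
  ⟨0, by
    rw [List.rotate_zero, hN]
    exact ((List.singleton_sublist.2 h₁).cons_cons a).append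
      ((List.singleton_sublist.2 h₂).cons_cons a)⟩

/-- If `W` is a one-block chord word on `m` strands (all generators of
the form `A(i,m)`), then in the diagram represented by `A(1,m)·W` the chord of the
initial generator `A(1,m)` (labeled `1`) crosses every other chord: in the standard name
of `A(1,m)·W` the two occurrences of `1` interleave with those of every other label. -/
theorem oneBlock_special_chord (m : ℕ) (hm : 2 ≤ m) (W : List (ℕ × ℕ))
    (hW : IsChordWord m ((1, m) :: W)) (hblock : ∀ p ∈ W, p.2 = m) :
    ∀ r, 2 ≤ r → r ≤ W.length + 1 →
      Crosses (standardName m ((1, m) :: W)) 1 r := by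
  intro r hr hrW
  obtain ⟨n, rfl⟩ : ∃ n, m = n + 1 := ⟨m - 1, by omega⟩
  obtain ⟨k, rfl⟩ : ∃ k, r = k + 2 := ⟨r - 2, by omega⟩
  have hk : k < W.length := by omega
  obtain ⟨hstart, hlt, hend⟩ := hW W[k] (List.mem_cons_of_mem _ (List.getElem_mem hk))
  obtain ⟨F, hF⟩ : ∃ F, standardName n ((1, n + 1) :: W) = 1 :: F := by
    obtain ⟨T, hT⟩ := strandLabels_prefix_standardName ((1, n + 1) :: W) (by omega : 1 ≤ n)
    exact ⟨_, by rw [← hT, strandLabels_cons_of_touches _ (Or.inl rfl), List.cons_append]⟩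
  have hr_first : k + 2 ∈ standardName n ((1, n + 1) :: W) :=
    mem_standardName hstart (by omega)
      (mem_strandLabels (W := (1, n + 1) :: W) (r := k + 1) (by simpa using hk) (Or.inl rfl))
  have hr_last : k + 2 ∈ (strandLabels W (n + 1)).map (· + 1) :=
    List.mem_map_of_mem (mem_strandLabels hk (Or.inr (hblock _ (List.getElem_mem hk))))
  refine crosses_of_eq_append (L₁ := F) ?_ ?_ hr_last
  · rw [standardName_succ, hF, strandLabels_cons_of_touches _ (Or.inr rfl)]
  · rw [hF] at hr_first
    exact (List.mem_cons.1 hr_first).resolve_left (by omega)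
end
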